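/- arXiv:1305.4296 — 9 statements merged into one kernel-verified Lean document; each statement's English description precedes it below -/
import Mathlib

section
/- Let y ∈ X, let a ∈ P_A(y), let λ ∈ (0,1], and set x := (1−λ)y + λa. Then: (i) a is the unique nearest point of x in A, i.e. P_A(x) = {a}; (ii) x − y = λ(a − y), and hence ‖x − y‖ = λ‖a − y‖ = λ·d_A(y); (iii) λ(x − a) = (1−λ)(y − x). -/
/-!
Expanding the square gives, for every `c ∈ A`,
`‖x - c‖² = (1 - λ)(‖y - c‖² - ‖y - a‖²) + ‖x - a‖² + λ‖a - c‖² ≥ ‖x - a‖² + λ‖a - c‖²`,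
because `a` is a nearest point of `y`. So `a` is a nearest point of `x`, and the strict gain
`λ‖a - c‖²` makes it the only one.
-/

/-- The set of nearest points of `u` in `C`. -/
def projSet {X : Type*} [NormedAddCommGroup X] (C : Set X) (u : X) : Set X :=
  {c ∈ C | ‖u - c‖ = Metric.infDist u C}

theorem norm_le_of_mem_projSet {X : Type*} [NormedAddCommGroup X] {A : Set X} {y a c : X}
    (ha : a ∈ projSet A y) (hc : c ∈ A) : ‖y - a‖ ≤ ‖y - c‖ := by
  rw [ha.2, ← dist_eq_norm]
  exact Metric.infDist_le_dist_of_mem hc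

section

variable {X : Type*} [NormedAddCommGroup X] [InnerProductSpace ℝ X]

theorem norm_smul_add_smul_sq (u v : X) (t : ℝ) :
    ‖(1 - t) • u + t • v‖ ^ 2 =
      (1 - t) * ‖u‖ ^ 2 + t * ‖v‖ ^ 2 - t * (1 - t) * ‖u - v‖ ^ 2 := by
  obtain ⟨w, rfl⟩ : ∃ w, u = v + w := ⟨u - v, by abel⟩
  rw [show (1 - t) • (v + w) + t • v = v + (1 - t) • w by module, add_sub_cancel_left,
    norm_add_sq_real, norm_add_sq_real, inner_smul_right, norm_smul, mul_pow,
    Real.norm_eq_abs, sq_abs]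
  ring

theorem sq_norm_sub_add_le_of_mem_projSet {A : Set X} {y a c : X} (ha : a ∈ projSet A y)
    (hc : c ∈ A) {t : ℝ} (ht : t ≤ 1) :
    ‖(1 - t) • y + t • a - a‖ ^ 2 + t * ‖a - c‖ ^ 2 ≤ ‖(1 - t) • y + t • a - c‖ ^ 2 := by
  have hya := norm_le_of_mem_projSet ha hc
  have hx_a : (1 - t) • y + t • a - a = (1 - t) • (y - a) := by module
  have hx_c := norm_smul_add_smul_sq (y - c) (a - c) t
  rw [sub_sub_sub_cancel_right,
    show (1 - t) • (y - c) + t • (a - c) = (1 - t) • y + t • a - c by module] at hx_c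
  rw [hx_a, hx_c, norm_smul, mul_pow, Real.norm_eq_abs, sq_abs]
  linarith [mul_le_mul_of_nonneg_left (pow_le_pow_left₀ (norm_nonneg _) hya 2)
    (sub_nonneg.2 ht)]

end

theorem projSet_eq_singleton_of_sq_norm_sub_add_le {X : Type*} [NormedAddCommGroup X]
    {A : Set X} {u a : X} {μ : ℝ} (hμ : 0 < μ) (haA : a ∈ A)
    (h : ∀ c ∈ A, ‖u - a‖ ^ 2 + μ * ‖a - c‖ ^ 2 ≤ ‖u - c‖ ^ 2) :
    projSet A u = {a} := by
  have hle : ∀ c ∈ A, ‖u - a‖ ≤ ‖u - c‖ := fun c hc =>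
    pow_le_pow_iff_left₀ (norm_nonneg _) (norm_nonneg _) two_ne_zero |>.1
      (le_of_add_le_of_nonneg_left (h c hc) (by positivity))
  have hinf : Metric.infDist u A = ‖u - a‖ := by
    refine le_antisymm ?_ ((Metric.le_infDist ⟨a, haA⟩).2 fun c hc => ?_)
    · simpa [dist_eq_norm] using Metric.infDist_le_dist_of_mem haA
    · simpa [dist_eq_norm] using hle c hc
  ext c
  simp only [projSet, hinf, Set.mem_ofPred_eq, Set.mem_singleton_iff]
  refine ⟨fun ⟨hc, hdist⟩ => ?_, by rintro rfl; exact ⟨haA, rfl⟩⟩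
  by_contra hca
  have hpos : 0 < μ * ‖a - c‖ ^ 2 :=
    mul_pos hμ (pow_pos (norm_pos_iff.2 (sub_ne_zero.2 (Ne.symm hca))) 2)
  have hc_le := h c hc
  rw [hdist] at hc_le
  linarith

theorem relaxed_projection_properties_general
    {X : Type*} [NormedAddCommGroup X] [InnerProductSpace ℝ X]
    (A : Set X)
    (y a : X) (ha : a ∈ projSet A y)
    (lam : ℝ) (hlam : lam ∈ Set.Ioc (0 : ℝ) 1)
    (x : X) (hx : x = (1 - lam) • y + lam • a) :
    projSet A x = {a} ∧
    x - y = lam • (a - y) ∧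
    ‖x - y‖ = lam * ‖a - y‖ ∧
    ‖x - y‖ = lam * Metric.infDist y A ∧
    lam • (x - a) = (1 - lam) • (y - x) := by
  obtain ⟨hlam0, hlam1⟩ := hlam
  have hxy : x - y = lam • (a - y) := by rw [hx]; module
  have hnorm : ‖x - y‖ = lam * ‖a - y‖ := by
    rw [hxy, norm_smul, Real.norm_of_nonneg hlam0.le]
  refine ⟨?_, hxy, hnorm, ?_, by rw [hx]; module⟩
  · subst hx
    exact projSet_eq_singleton_of_sq_norm_sub_add_le hlam0 ha.1
      fun c hc => sq_norm_sub_add_le_of_mem_projSet ha hc hlam1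
  · rw [hnorm, ← ha.2, norm_sub_rev]

/-- Proposition 3.2: properties of relaxed projections. -/
theorem relaxed_projection_properties
    {X : Type*} [NormedAddCommGroup X] [InnerProductSpace ℝ X] [FiniteDimensional ℝ X]
    (A : Set X) (hA : A.Nonempty) (hAclosed : IsClosed A)
    (y a : X) (ha : a ∈ projSet A y)
    (lam : ℝ) (hlam : lam ∈ Set.Ioc (0 : ℝ) 1)
    (x : X) (hx : x = (1 - lam) • y + lam • a) :
    projSet A x = {a} ∧
    x - y = lam • (a - y) ∧
    ‖x - y‖ = lam * ‖a - y‖ ∧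
    ‖x - y‖ = lam * Metric.infDist y A ∧
    lam • (x - a) = (1 - lam) • (y - x) :=
  relaxed_projection_properties_general A y a ha lam hlam x hx
end

section
/- Let (a_n), (x_n), (b_n), (y_n) be MARP sequences with starting point y_{−1}, let n ∈ ℕ, and let θ ∈ [0,1] be such that ⟨y_n − x_n, y_{n−1} − x_n⟩ ≤ θ‖y_n − x_n‖·‖x_n − y_{n−1}‖. Then ‖x_{n+1} − y_n‖ ≤ (λ_{n+1}/λ_n)·√(λ_n² + (1−λ_n)² + 2θλ_n(1−λ_n)) · max{‖y_n − x_n‖, ‖x_n − y_{n−1}‖}. -/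
open Filter Topology RealInnerProductSpace

/-- MARP sequences: here `Y n` denotes `y_{n-1}`, so `Y 0 = y_{-1}` is the starting
point and `Y (n+1) = y_n`. -/
def IsMARP {X : Type*} [NormedAddCommGroup X] [NormedSpace ℝ X]
    (A B : Set X) (lam mu : ℕ → ℝ) (a x b Y : ℕ → X) : Prop :=
  ∀ n : ℕ, a n ∈ projSet A (Y n) ∧ x n = (1 - lam n) • Y n + lam n • a n ∧
    b n ∈ projSet B (x n) ∧ Y (n + 1) = (1 - mu n) • x n + mu n • b n

/-!
Write `u = y_n - x_n` and `v = y_{n-1} - x_n`. Since `x_n` is the `λ_n`-relaxation of `y_{n-1}`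
towards `a_n`, one has `λ_n (y_n - a_n) = λ_n u + (1 - λ_n) v`, and the angle condition bounds
the norm of this combination by `√(λ_n² + (1-λ_n)² + 2θλ_n(1-λ_n)) · max ‖u‖ ‖v‖`.
On the other hand `x_{n+1} - y_n = λ_{n+1} (a_{n+1} - y_n)`, and `a_{n+1}` is at least as close
to `y_n` as the point `a_n ∈ A`.
-/

theorem norm_sub_le_of_mem_projSet {X : Type*} [NormedAddCommGroup X] {C : Set X} {u c c' : X}
    (hc : c ∈ projSet C u) (hc' : c' ∈ C) : ‖u - c‖ ≤ ‖u - c'‖ := by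
  rw [hc.2, ← dist_eq_norm]
  exact Metric.infDist_le_dist_of_mem hc'

section InnerProductSpace

variable {E : Type*} [NormedAddCommGroup E] [InnerProductSpace ℝ E]

theorem norm_smul_add_smul_sq_le_of_inner_le {u v : E} {s t θ : ℝ} (hs : 0 ≤ s) (ht : 0 ≤ t)
    (hθ : 0 ≤ θ) (huv : ⟪u, v⟫ ≤ θ * ‖u‖ * ‖v‖) :
    ‖s • u + t • v‖ ^ 2 ≤ (s ^ 2 + t ^ 2 + 2 * θ * s * t) * max ‖u‖ ‖v‖ ^ 2 := by
  set M := max ‖u‖ ‖v‖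
  have hu : ‖u‖ ≤ M := le_max_left _ _
  have hv : ‖v‖ ≤ M := le_max_right _ _
  have hinner : ⟪u, v⟫ ≤ θ * M ^ 2 := by
    calc ⟪u, v⟫ ≤ θ * (‖u‖ * ‖v‖) := by rw [← mul_assoc]; exact huv
      _ ≤ θ * M ^ 2 := by rw [sq]; gcongr
  calc ‖s • u + t • v‖ ^ 2 = s ^ 2 * ‖u‖ ^ 2 + 2 * (s * t) * ⟪u, v⟫ + t ^ 2 * ‖v‖ ^ 2 := by
        rw [norm_add_sq_real, norm_smul, norm_smul, real_inner_smul_left, real_inner_smul_right,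
          Real.norm_of_nonneg hs, Real.norm_of_nonneg ht]
        ring
    _ ≤ s ^ 2 * M ^ 2 + 2 * (s * t) * (θ * M ^ 2) + t ^ 2 * M ^ 2 := by gcongr
    _ = (s ^ 2 + t ^ 2 + 2 * θ * s * t) * M ^ 2 := by ring

theorem norm_smul_add_smul_le_of_inner_le {u v : E} {s t θ : ℝ} (hs : 0 ≤ s) (ht : 0 ≤ t)
    (hθ : 0 ≤ θ) (huv : ⟪u, v⟫ ≤ θ * ‖u‖ * ‖v‖) :
    ‖s • u + t • v‖ ≤ Real.sqrt (s ^ 2 + t ^ 2 + 2 * θ * s * t) * max ‖u‖ ‖v‖ := by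
  have hM : 0 ≤ max ‖u‖ ‖v‖ := (norm_nonneg u).trans (le_max_left _ _)
  rw [← Real.sqrt_sq hM, ← Real.sqrt_mul' _ (sq_nonneg _)]
  exact Real.le_sqrt_of_sq_le (norm_smul_add_smul_sq_le_of_inner_le hs ht hθ huv)

end InnerProductSpace

theorem marp_one_step_estimate_general
    {X : Type*} [NormedAddCommGroup X] [InnerProductSpace ℝ X]
    (A B : Set X)
    (lam mu : ℕ → ℝ) (hlam : ∀ n, lam n ∈ Set.Ioc (0 : ℝ) 1)
    (a x b Y : ℕ → X) (hMARP : IsMARP A B lam mu a x b Y)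
    (n : ℕ) (θ : ℝ) (hθ : θ ∈ Set.Icc (0 : ℝ) 1)
    (hang : ⟪Y (n + 1) - x n, Y n - x n⟫ ≤ θ * ‖Y (n + 1) - x n‖ * ‖x n - Y n‖) :
    ‖x (n + 1) - Y (n + 1)‖ ≤
      (lam (n + 1) / lam n) *
        Real.sqrt ((lam n) ^ 2 + (1 - lam n) ^ 2 + 2 * θ * lam n * (1 - lam n)) *
          max (‖Y (n + 1) - x n‖) (‖x n - Y n‖) := by
  obtain ⟨hlam_pos, hlam_le⟩ := hlam n
  have hlam_succ : 0 ≤ lam (n + 1) := (hlam (n + 1)).1.le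
  obtain ⟨haA, hx, -, -⟩ := hMARP n
  obtain ⟨haA', hx', -, -⟩ := hMARP (n + 1)
  have hstep : x (n + 1) - Y (n + 1) = lam (n + 1) • (a (n + 1) - Y (n + 1)) := by
    rw [hx']; module
  have hkey : lam n • (Y (n + 1) - a n) =
      lam n • (Y (n + 1) - x n) + (1 - lam n) • (Y n - x n) := by
    rw [hx]; module
  rw [norm_sub_rev (x n)] at hang ⊢
  calc ‖x (n + 1) - Y (n + 1)‖ = lam (n + 1) * ‖Y (n + 1) - a (n + 1)‖ := by
        rw [hstep, norm_smul, Real.norm_of_nonneg hlam_succ, norm_sub_rev]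
    _ ≤ lam (n + 1) * ‖Y (n + 1) - a n‖ :=
        mul_le_mul_of_nonneg_left (norm_sub_le_of_mem_projSet haA' haA.1) hlam_succ
    _ = lam (n + 1) / lam n * ‖lam n • (Y (n + 1) - a n)‖ := by
        rw [norm_smul, Real.norm_of_nonneg hlam_pos.le]; field_simp
    _ ≤ _ := by
        rw [hkey, mul_assoc]
        exact mul_le_mul_of_nonneg_left
          (norm_smul_add_smul_le_of_inner_le hlam_pos.le (sub_nonneg.2 hlam_le) hθ.1 hang)
          (div_nonneg hlam_succ hlam_pos.le)

/-- Lemma 3.8: the key one-step contraction estimate for the MARP. -/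
theorem marp_one_step_estimate
    {X : Type*} [NormedAddCommGroup X] [InnerProductSpace ℝ X] [FiniteDimensional ℝ X]
    (A B : Set X) (hA : A.Nonempty) (hAclosed : IsClosed A)
    (hB : B.Nonempty) (hBclosed : IsClosed B)
    (lam mu : ℕ → ℝ) (hlam : ∀ n, lam n ∈ Set.Ioc (0 : ℝ) 1)
    (hmu : ∀ n, mu n ∈ Set.Ioc (0 : ℝ) 1)
    (a x b Y : ℕ → X) (hMARP : IsMARP A B lam mu a x b Y)
    (n : ℕ) (θ : ℝ) (hθ : θ ∈ Set.Icc (0 : ℝ) 1)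
    (hang : ⟪Y (n + 1) - x n, Y n - x n⟫ ≤ θ * ‖Y (n + 1) - x n‖ * ‖x n - Y n‖) :
    ‖x (n + 1) - Y (n + 1)‖ ≤
      (lam (n + 1) / lam n) *
        Real.sqrt ((lam n) ^ 2 + (1 - lam n) ^ 2 + 2 * θ * lam n * (1 - lam n)) *
          max (‖Y (n + 1) - x n‖) (‖x n - Y n‖) :=
  marp_one_step_estimate_general A B lam mu hlam a x b Y hMARP n θ hθ hang
end

section
/- Let (X,d) be a complete metric space, let (x_n)_{n∈ℕ} and (y_n)_{n≥−1} be sequences in X, and let r > 0 and ρ ∈ [0,1). Assume the sequences have the alternating contraction property at y_{−1} with parameters (r,ρ), and that M := max{d(y_0, x_0), d(x_0, y_{−1})} ≤ r(1−ρ)/2. Then there exists c̄ ∈ X such that for all n ∈ ℕ, max{d(x_n, c̄), d(y_n, c̄)} ≤ (M(1+ρ)/(1−ρ))·ρ^n ≤ (r(1+ρ)/2)·ρ^n; in particular (x_n) and (y_n) converge linearly to c̄ with rate ρ. Moreover, all x_n, all y_n (n ∈ ℕ) and c̄ lie in the closed ball of radius r centered at y_{−1}. -/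
open Filter Topology

/-- The alternating contraction property at `c` with parameters `(r, ρ)`.
Here `Y n` denotes `y_{n-1}`, so `Y 0 = y_{-1}` and `Y (n+1) = y_n`. -/
def AltContraction {X : Type*} [MetricSpace X] (x Y : ℕ → X) (c : X) (r ρ : ℝ) : Prop :=
  ∀ n : ℕ,
    (max (dist (x n) c) (dist (Y (n + 1)) c) ≤ r →
      dist (Y (n + 1)) (x (n + 1)) ≤ ρ * max (dist (Y n) (x n)) (dist (x n) (Y (n + 1)))) ∧
    (max (dist (Y (n + 1)) c) (dist (x (n + 1)) c) ≤ r →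
      dist (x (n + 1)) (Y (n + 2)) ≤
        ρ * max (dist (x n) (Y (n + 1))) (dist (Y (n + 1)) (x (n + 1))))

/-! The two steps `y_{n-1} → x_n → y_n` both have length at most `M ρ^n`: this is proved by
induction on `n`, because as long as it holds, summing the geometric series keeps all the
iterates in the ball of radius `2M/(1-ρ) ≤ r` about `y_{-1}`, where the contraction applies.
The bound then makes `(x_n)` Cauchy with geometric rate, and `y_n` is within `M ρ^{n+1}`
of `x_{n+1}`. -/

open Finset

section

variable {X : Type*} [MetricSpace X] {x Y : ℕ → X} {r ρ M : ℝ}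

def StepsLE (x Y : ℕ → X) (M ρ : ℝ) (n : ℕ) : Prop :=
  dist (Y n) (x n) ≤ M * ρ ^ n ∧ dist (x n) (Y (n + 1)) ≤ M * ρ ^ n

lemma two_mul_geom_sum_le (hρ0 : 0 ≤ ρ) (hρ1 : ρ < 1) (hM0 : 0 ≤ M)
    (hM : M ≤ r * (1 - ρ) / 2) (n : ℕ) : 2 * M * ∑ i ∈ range n, ρ ^ i ≤ r :=
  calc 2 * M * ∑ i ∈ range n, ρ ^ i ≤ 2 * M * (1 / (1 - ρ)) := by
        gcongr
        simpa [Nat.Ico_zero_eq_range] using geom_sum_Ico_le_of_lt_one (m := 0) (n := n) hρ0 hρ1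
    _ ≤ r := by rw [mul_one_div, div_le_iff₀ (by linarith)]; linarith

lemma dist_Y_zero_le_of_stepsLE {n : ℕ} (h : ∀ k < n, StepsLE x Y M ρ k) :
    dist (Y n) (Y 0) ≤ 2 * M * ∑ i ∈ range n, ρ ^ i := by
  rw [dist_comm, mul_sum]
  refine dist_le_range_sum_of_dist_le n fun {k} hk => ?_
  obtain ⟨hYx, hxY⟩ := h k hk
  linarith [dist_triangle (Y k) (x k) (Y (k + 1))]

lemma dist_x_zero_le_of_stepsLE {n : ℕ} (h : ∀ k < n, StepsLE x Y M ρ k)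
    (hn : dist (Y n) (x n) ≤ M * ρ ^ n) :
    dist (x n) (Y 0) ≤ 2 * M * ∑ i ∈ range (n + 1), ρ ^ i := by
  rw [sum_range_succ]
  linarith [dist_triangle (x n) (Y n) (Y 0), dist_comm (x n) (Y n), dist_Y_zero_le_of_stepsLE h,
    dist_nonneg.trans hn]

lemma AltContraction.stepsLE_succ (hcontr : AltContraction x Y (Y 0) r ρ) (hρ0 : 0 ≤ ρ)
    (hρ1 : ρ < 1) (hM : M ≤ r * (1 - ρ) / 2) {n : ℕ} (h : ∀ k < n + 1, StepsLE x Y M ρ k) :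
    StepsLE x Y M ρ (n + 1) := by
  have hM0 : 0 ≤ M := by simpa using dist_nonneg.trans (h 0 n.succ_pos).1
  have hball := two_mul_geom_sum_le hρ0 hρ1 hM0 hM
  obtain ⟨hYx, hxY⟩ := h n n.lt_succ_self
  have hx := dist_x_zero_le_of_stepsLE (fun k hk => h k (by omega)) hYx
  have hY := dist_Y_zero_le_of_stepsLE h
  have hYx' : dist (Y (n + 1)) (x (n + 1)) ≤ M * ρ ^ (n + 1) :=
    calc _ ≤ ρ * max (dist (Y n) (x n)) (dist (x n) (Y (n + 1))) :=
          (hcontr n).1 (max_le (hx.trans (hball _)) (hY.trans (hball _)))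
      _ ≤ ρ * (M * ρ ^ n) := by gcongr; exact max_le hYx hxY
      _ = M * ρ ^ (n + 1) := by ring
  have hx' := dist_x_zero_le_of_stepsLE h hYx'
  refine ⟨hYx', ?_⟩
  calc _ ≤ ρ * max (dist (x n) (Y (n + 1))) (dist (Y (n + 1)) (x (n + 1))) :=
        (hcontr n).2 (max_le (hY.trans (hball _)) (hx'.trans (hball _)))
    _ ≤ ρ * (M * ρ ^ n) := by
        gcongr
        exact max_le hxY (hYx'.trans
          (mul_le_mul_of_nonneg_left (pow_le_pow_of_le_one hρ0 hρ1.le n.le_succ) hM0))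
    _ = M * ρ ^ (n + 1) := by ring

lemma AltContraction.stepsLE (hcontr : AltContraction x Y (Y 0) r ρ) (hρ0 : 0 ≤ ρ)
    (hρ1 : ρ < 1) (hM : M ≤ r * (1 - ρ) / 2) (h0 : StepsLE x Y M ρ 0) (n : ℕ) :
    StepsLE x Y M ρ n := by
  induction n using Nat.strong_induction_on with
  | _ n ih =>
    cases n with
    | zero => exact h0
    | succ n => exact hcontr.stepsLE_succ hρ0 hρ1 hM ih

lemma dist_zero_le_of_stepsLE (hρ0 : 0 ≤ ρ) (hρ1 : ρ < 1) (hM : M ≤ r * (1 - ρ) / 2)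
    (h : ∀ n, StepsLE x Y M ρ n) (n : ℕ) :
    dist (x n) (Y 0) ≤ r ∧ dist (Y (n + 1)) (Y 0) ≤ r := by
  have hM0 : 0 ≤ M := by simpa using dist_nonneg.trans (h 0).1
  have hball := two_mul_geom_sum_le hρ0 hρ1 hM0 hM
  exact ⟨(dist_x_zero_le_of_stepsLE (fun k _ => h k) (h n).1).trans (hball _),
    (dist_Y_zero_le_of_stepsLE fun k _ => h k).trans (hball _)⟩

lemma dist_x_succ_le_of_stepsLE (h : ∀ n, StepsLE x Y M ρ n) (n : ℕ) :
    dist (x n) (x (n + 1)) ≤ M * (1 + ρ) * ρ ^ n := by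
  have : M * (1 + ρ) * ρ ^ n = M * ρ ^ n + M * ρ ^ (n + 1) := by ring
  linarith [dist_triangle (x n) (Y (n + 1)) (x (n + 1)), (h n).2, (h (n + 1)).1]

lemma exists_tendsto_of_stepsLE [CompleteSpace X] (hρ1 : ρ < 1)
    (h : ∀ n, StepsLE x Y M ρ n) :
    ∃ c, Tendsto x atTop (𝓝 c) ∧
      ∀ n, max (dist (x n) c) (dist (Y (n + 1)) c) ≤ M * (1 + ρ) / (1 - ρ) * ρ ^ n := by
  have hstep := dist_x_succ_le_of_stepsLE h
  obtain ⟨c, hc⟩ := cauchySeq_tendsto_of_complete (cauchySeq_of_le_geometric ρ _ hρ1 hstep)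
  have hxc n : dist (x n) c ≤ M * (1 + ρ) / (1 - ρ) * ρ ^ n := by
    simpa only [mul_div_right_comm] using dist_le_of_le_geometric_of_tendsto ρ _ hρ1 hstep hc n
  refine ⟨c, hc, fun n => max_le (hxc n) ?_⟩
  have h1ρ : 1 - ρ ≠ 0 := (sub_pos.2 hρ1).ne'
  have hMρ : 0 ≤ M * ρ ^ n := dist_nonneg.trans (h n).1
  calc dist (Y (n + 1)) c ≤ M * ρ ^ (n + 1) + M * (1 + ρ) / (1 - ρ) * ρ ^ (n + 1) :=
        (dist_triangle _ (x (n + 1)) c).trans (add_le_add (h (n + 1)).1 (hxc (n + 1)))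
    _ = M * (1 + ρ) / (1 - ρ) * ρ ^ n - M * ρ ^ n := by field_simp; ring
    _ ≤ M * (1 + ρ) / (1 - ρ) * ρ ^ n := by linarith

end

theorem abstract_linear_convergence_of_alt_contraction_general
    {X : Type*} [MetricSpace X] [CompleteSpace X]
    (x Y : ℕ → X) (r ρ : ℝ) (hρ : ρ ∈ Set.Ico (0 : ℝ) 1)
    (hcontr : AltContraction x Y (Y 0) r ρ)
    (M : ℝ) (hMdef : M = max (dist (Y 1) (x 0)) (dist (x 0) (Y 0)))
    (hM : M ≤ r * (1 - ρ) / 2) :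
    ∃ c : X,
      (∀ n : ℕ, max (dist (x n) c) (dist (Y (n + 1)) c) ≤ M * (1 + ρ) / (1 - ρ) * ρ ^ n ∧
        M * (1 + ρ) / (1 - ρ) * ρ ^ n ≤ r * (1 + ρ) / 2 * ρ ^ n) ∧
      Tendsto x atTop (nhds c) ∧ Tendsto (fun n => Y (n + 1)) atTop (nhds c) ∧
      (∀ n : ℕ, dist (x n) (Y 0) ≤ r ∧ dist (Y (n + 1)) (Y 0) ≤ r) ∧
      dist c (Y 0) ≤ r := by
  obtain ⟨hρ0, hρ1⟩ := hρ
  have h0 : StepsLE x Y M ρ 0 := by simp [StepsLE, hMdef, dist_comm]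
  have hsteps := hcontr.stepsLE hρ0 hρ1 hM h0
  obtain ⟨c, hxc, hdist⟩ := exists_tendsto_of_stepsLE hρ1 hsteps
  have hball := dist_zero_le_of_stepsLE hρ0 hρ1 hM hsteps
  refine ⟨c, fun n => ⟨hdist n, ?_⟩, hxc, ?_, hball, ?_⟩
  · refine mul_le_mul_of_nonneg_right ?_ (pow_nonneg hρ0 n)
    rw [div_le_iff₀ (by linarith)]
    calc M * (1 + ρ) ≤ r * (1 - ρ) / 2 * (1 + ρ) := by gcongr
      _ = r * (1 + ρ) / 2 * (1 - ρ) := by ring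
  · refine tendsto_iff_dist_tendsto_zero.2 (squeeze_zero (fun _ => dist_nonneg)
      (fun n => (le_max_right _ _).trans (hdist n)) ?_)
    simpa using (tendsto_pow_atTop_nhds_zero_of_lt_one hρ0 hρ1).const_mul (M * (1 + ρ) / (1 - ρ))
  · exact le_of_tendsto (hxc.dist tendsto_const_nhds) (Eventually.of_forall fun n => (hball n).1)

/-- Theorem 4.3 (abstract linear convergence). -/
theorem abstract_linear_convergence_of_alt_contraction
    {X : Type*} [MetricSpace X] [CompleteSpace X]
    (x Y : ℕ → X) (r ρ : ℝ) (hr : 0 < r) (hρ : ρ ∈ Set.Ico (0 : ℝ) 1)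
    (hcontr : AltContraction x Y (Y 0) r ρ)
    (M : ℝ) (hMdef : M = max (dist (Y 1) (x 0)) (dist (x 0) (Y 0)))
    (hM : M ≤ r * (1 - ρ) / 2) :
    ∃ c : X,
      (∀ n : ℕ, max (dist (x n) c) (dist (Y (n + 1)) c) ≤ M * (1 + ρ) / (1 - ρ) * ρ ^ n ∧
        M * (1 + ρ) / (1 - ρ) * ρ ^ n ≤ r * (1 + ρ) / 2 * ρ ^ n) ∧
      Tendsto x atTop (nhds c) ∧ Tendsto (fun n => Y (n + 1)) atTop (nhds c) ∧
      (∀ n : ℕ, dist (x n) (Y 0) ≤ r ∧ dist (Y (n + 1)) (Y 0) ≤ r) ∧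
      dist c (Y 0) ≤ r :=
  abstract_linear_convergence_of_alt_contraction_general x Y r ρ hρ hcontr M hMdef hM
end

section
/- Let (λ_n)_{n∈ℕ} and (μ_n)_{n∈ℕ} be nonincreasing sequences in (0,1] with limits λ_∞ and μ_∞, and set α_0 := max{λ_0, μ_0} and α_∞ := min{λ_∞, μ_∞}. Let θ ∈ [0,1) and define ρ̂ ≥ 0 by ρ̂² := sup_{n∈ℕ} max{ (λ_{n+1}/λ_n)²·(λ_n² + (1−λ_n)² + 2θλ_n(1−λ_n)), (μ_{n+1}/μ_n)²·(μ_n² + (1−μ_n)² + 2θμ_n(1−μ_n)) }. Then 0 < ρ̂ ≤ √(1 − 2(1−θ)·min{α_0(1−α_0), α_∞(1−α_∞)}) ≤ 1; consequently, if 1 > α_0 ≥ α_∞ > 0, then ρ̂ < 1. -/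
/-!
Each factor in the supremum equals `(u (n+1) / u n)^2 * (1 - 2(1-θ) u n (1 - u n))`. The ratio is
at most `1` because the sequences are nonincreasing, and every term `u n` lies in `[α∞, α₀]`, where
the concave function `t ↦ t(1-t)` is bounded below by its smaller endpoint value.
-/

open Filter Topology

theorem min_mul_one_sub_le_of_mem_Icc {a b x : ℝ} (hx : x ∈ Set.Icc a b) :
    min (b * (1 - b)) (a * (1 - a)) ≤ x * (1 - x) := by
  obtain ⟨hax, hxb⟩ := hx
  rcases le_or_gt (x + a) 1 with hle | hlt
  · refine (min_le_right _ _).trans ?_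
    nlinarith [mul_nonneg (sub_nonneg.2 hax) (by linarith : (0 : ℝ) ≤ 1 - x - a)]
  · refine (min_le_left _ _).trans ?_
    nlinarith [mul_nonneg (sub_nonneg.2 hxb) (by linarith : (0 : ℝ) ≤ x + b - 1)]

theorem min_mul_one_sub_nonneg {a b : ℝ} (ha : 0 ≤ a) (hab : a ≤ b) (hb : b ≤ 1) :
    0 ≤ min (b * (1 - b)) (a * (1 - a)) :=
  le_min (mul_nonneg (ha.trans hab) (sub_nonneg.2 hb))
    (mul_nonneg ha (sub_nonneg.2 (hab.trans hb)))

theorem min_mul_one_sub_pos {a b : ℝ} (ha : 0 < a) (hab : a ≤ b) (hb : b < 1) :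
    0 < min (b * (1 - b)) (a * (1 - a)) :=
  lt_min (mul_pos (ha.trans_le hab) (sub_pos.2 hb))
    (mul_pos ha (sub_pos.2 (hab.trans_lt hb)))

theorem Antitone.mem_Icc_of_tendsto {u : ℕ → ℝ} {l : ℝ} (hu : Antitone u)
    (hl : Tendsto u atTop (𝓝 l)) (n : ℕ) : u n ∈ Set.Icc l (u 0) :=
  ⟨hu.le_of_tendsto hl n, hu (Nat.zero_le n)⟩

/-- `ρ̂²` is the supremum over `n` of `rateFactor θ (u n) (u (n + 1))` for `u = λ, μ`. -/
noncomputable def rateFactor (θ x y : ℝ) : ℝ :=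
  (y / x) ^ 2 * (x ^ 2 + (1 - x) ^ 2 + 2 * θ * x * (1 - x))

section rateFactor

variable {θ : ℝ}

theorem sq_add_sq_one_sub_add_eq (θ x : ℝ) :
    x ^ 2 + (1 - x) ^ 2 + 2 * θ * x * (1 - x) = 1 - 2 * (1 - θ) * (x * (1 - x)) := by
  ring

theorem half_le_sq_add_sq_one_sub_add (hθ0 : 0 ≤ θ) (hθ1 : θ ≤ 1) (x : ℝ) :
    1 / 2 ≤ x ^ 2 + (1 - x) ^ 2 + 2 * θ * x * (1 - x) := by
  nlinarith [mul_nonneg (sub_nonneg.2 hθ1) (sq_nonneg (2 * x - 1))]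

theorem rateFactor_pos (hθ0 : 0 ≤ θ) (hθ1 : θ ≤ 1) {x y : ℝ} (hx : 0 < x) (hy : 0 < y) :
    0 < rateFactor θ x y :=
  mul_pos (pow_pos (div_pos hy hx) 2)
    (one_half_pos.trans_le (half_le_sq_add_sq_one_sub_add hθ0 hθ1 x))

theorem rateFactor_le (hθ0 : 0 ≤ θ) (hθ1 : θ ≤ 1) {m x y : ℝ} (hx : 0 < x) (hy : 0 ≤ y)
    (hyx : y ≤ x) (hm : m ≤ x * (1 - x)) :
    rateFactor θ x y ≤ 1 - 2 * (1 - θ) * m := by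
  have hratio : (y / x) ^ 2 ≤ 1 := pow_le_one₀ (div_nonneg hy hx.le) ((div_le_one hx).2 hyx)
  have hquad := half_le_sq_add_sq_one_sub_add hθ0 hθ1 x
  calc rateFactor θ x y ≤ 1 * (x ^ 2 + (1 - x) ^ 2 + 2 * θ * x * (1 - x)) :=
        mul_le_mul_of_nonneg_right hratio (by linarith)
    _ = 1 - 2 * (1 - θ) * (x * (1 - x)) := by rw [one_mul, sq_add_sq_one_sub_add_eq]
    _ ≤ 1 - 2 * (1 - θ) * m := by nlinarith

theorem rateFactor_le_of_antitone (hθ0 : 0 ≤ θ) (hθ1 : θ ≤ 1) {u : ℕ → ℝ} (hu : Antitone u)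
    (hpos : ∀ n, 0 < u n) {a b : ℝ} (hab : ∀ n, u n ∈ Set.Icc a b) (n : ℕ) :
    rateFactor θ (u n) (u (n + 1)) ≤ 1 - 2 * (1 - θ) * min (b * (1 - b)) (a * (1 - a)) :=
  rateFactor_le hθ0 hθ1 (hpos n) (hpos (n + 1)).le (hu n.le_succ)
    (min_mul_one_sub_le_of_mem_Icc (hab n))

end rateFactor

/-- Lemma 5.2: bound on the rate constant ρ̂. -/
theorem rate_constant_bound
    (lam mu : ℕ → ℝ) (hlam : ∀ n, lam n ∈ Set.Ioc (0 : ℝ) 1)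
    (hmu : ∀ n, mu n ∈ Set.Ioc (0 : ℝ) 1)
    (hlam_mono : ∀ n : ℕ, lam (n + 1) ≤ lam n) (hmu_mono : ∀ n : ℕ, mu (n + 1) ≤ mu n)
    (laminf muinf : ℝ)
    (hlaminf : Tendsto lam atTop (nhds laminf)) (hmuinf : Tendsto mu atTop (nhds muinf))
    (α₀ αinf : ℝ) (hα₀ : α₀ = max (lam 0) (mu 0)) (hαinf : αinf = min laminf muinf)
    (θ : ℝ) (hθ : θ ∈ Set.Ico (0 : ℝ) 1)
    (ρhat : ℝ)
    (hρhat : ρhat = Real.sqrt (⨆ n : ℕ, max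
      ((lam (n + 1) / lam n) ^ 2 *
        ((lam n) ^ 2 + (1 - lam n) ^ 2 + 2 * θ * lam n * (1 - lam n)))
      ((mu (n + 1) / mu n) ^ 2 *
        ((mu n) ^ 2 + (1 - mu n) ^ 2 + 2 * θ * mu n * (1 - mu n))))) :
    0 < ρhat ∧
    ρhat ≤ Real.sqrt (1 - 2 * (1 - θ) * min (α₀ * (1 - α₀)) (αinf * (1 - αinf))) ∧
    Real.sqrt (1 - 2 * (1 - θ) * min (α₀ * (1 - α₀)) (αinf * (1 - αinf))) ≤ 1 ∧
    (α₀ < 1 → 0 < αinf → ρhat < 1) := by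
  obtain ⟨hθ0, hθ1⟩ := hθ
  have hlam_anti := antitone_nat_of_succ_le hlam_mono
  have hmu_anti := antitone_nat_of_succ_le hmu_mono
  have hlam_mem (n : ℕ) : lam n ∈ Set.Icc αinf α₀ :=
    Set.Icc_subset_Icc (hαinf ▸ min_le_left _ _) (hα₀ ▸ le_max_left _ _)
      (hlam_anti.mem_Icc_of_tendsto hlaminf n)
  have hmu_mem (n : ℕ) : mu n ∈ Set.Icc αinf α₀ :=
    Set.Icc_subset_Icc (hαinf ▸ min_le_right _ _) (hα₀ ▸ le_max_right _ _)
      (hmu_anti.mem_Icc_of_tendsto hmuinf n)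
  have hαinf_nonneg : 0 ≤ αinf := hαinf ▸ le_min
    (ge_of_tendsto' hlaminf fun n => (hlam n).1.le) (ge_of_tendsto' hmuinf fun n => (hmu n).1.le)
  have hαinf_le : αinf ≤ α₀ := (hlam_mem 0).1.trans (hlam_mem 0).2
  have hα₀_le : α₀ ≤ 1 := hα₀ ▸ max_le (hlam 0).2 (hmu 0).2
  set B := 1 - 2 * (1 - θ) * min (α₀ * (1 - α₀)) (αinf * (1 - αinf))
  have hfactor_le (n : ℕ) :
      max (rateFactor θ (lam n) (lam (n + 1))) (rateFactor θ (mu n) (mu (n + 1))) ≤ B :=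
    max_le (rateFactor_le_of_antitone hθ0 hθ1.le hlam_anti (fun n => (hlam n).1) hlam_mem n)
      (rateFactor_le_of_antitone hθ0 hθ1.le hmu_anti (fun n => (hmu n).1) hmu_mem n)
  have hsup_pos : 0 < ⨆ n, max (rateFactor θ (lam n) (lam (n + 1)))
      (rateFactor θ (mu n) (mu (n + 1))) :=
    (rateFactor_pos hθ0 hθ1.le (hlam 0).1 (hlam 1).1).trans_le
      ((le_max_left _ _).trans (le_ciSup ⟨B, Set.forall_mem_range.2 hfactor_le⟩ 0))
  have hρ_le : ρhat ≤ Real.sqrt B := hρhat ▸ Real.sqrt_le_sqrt (ciSup_le hfactor_le)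
  have hB_le : B ≤ 1 := by
    have := min_mul_one_sub_nonneg hαinf_nonneg hαinf_le hα₀_le
    nlinarith
  refine ⟨hρhat ▸ Real.sqrt_pos.2 hsup_pos, hρ_le, Real.sqrt_le_one.2 hB_le, fun h1 h2 => ?_⟩
  have hB_lt : B < 1 := by
    have := min_mul_one_sub_pos h2 hαinf_le h1
    nlinarith
  exact hρ_le.trans_lt ((Real.sqrt_lt' one_pos).2 (by rwa [one_pow]))
end

section
/- Let (a_n), (x_n), (b_n), (y_n) be MARP sequences with starting point y_{−1}, where λ_n → λ_∞ and μ_n → μ_∞. Suppose both (x_n) and (y_n) converge to the same point c̄ ∈ X. Then: (i) if λ_∞ > 0, then c̄ ∈ A; (ii) if μ_∞ > 0, then c̄ ∈ B; (iii) if min{λ_∞, μ_∞} > 0, then c̄ ∈ A ∩ B. -/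
open Filter Topology

theorem tendsto_of_tendsto_sub_smul_add_smul {ι 𝕜 E : Type*} [NormedField 𝕜]
    [AddCommGroup E] [TopologicalSpace E] [IsTopologicalAddGroup E] [Module 𝕜 E]
    [ContinuousSMul 𝕜 E] {l : Filter ι} {t : ι → 𝕜} {u v w : ι → E} {s : 𝕜} {c : E}
    (hv : Tendsto v l (𝓝 c)) (hu : Tendsto u l (𝓝 c)) (ht : Tendsto t l (𝓝 s)) (hs : s ≠ 0)
    (huvw : ∀ i, u i = (1 - t i) • v i + t i • w i) :
    Tendsto w l (𝓝 c) := by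
  have hlim : Tendsto (fun i => (t i)⁻¹ • (u i - (1 - t i) • v i)) l
      (𝓝 (s⁻¹ • (c - (1 - s) • c))) :=
    (ht.inv₀ hs).smul (hu.sub ((tendsto_const_nhds.sub ht).smul hv))
  have hc : s⁻¹ • (c - (1 - s) • c) = c := by
    rw [show c - (1 - s) • c = s • c by module, inv_smul_smul₀ hs]
  have hw : (fun i => (t i)⁻¹ • (u i - (1 - t i) • v i)) =ᶠ[l] w := by
    filter_upwards [ht.eventually_ne hs] with i hti
    rw [huvw i, add_sub_cancel_left, inv_smul_smul₀ hti]
  rw [hc] at hlim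
  exact hlim.congr' hw

theorem marp_limit_location_general
    {X : Type*} [NormedAddCommGroup X] [InnerProductSpace ℝ X]
    (A B : Set X) (hAclosed : IsClosed A)
    (hBclosed : IsClosed B)
    (lam mu : ℕ → ℝ)
    (laminf muinf : ℝ)
    (hlaminf : Tendsto lam atTop (nhds laminf)) (hmuinf : Tendsto mu atTop (nhds muinf))
    (a x b Y : ℕ → X) (hMARP : IsMARP A B lam mu a x b Y)
    (cbar : X) (hx : Tendsto x atTop (nhds cbar))
    (hy : Tendsto (fun n => Y (n + 1)) atTop (nhds cbar)) :
    (0 < laminf → cbar ∈ A) ∧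
    (0 < muinf → cbar ∈ B) ∧
    (0 < min laminf muinf → cbar ∈ A ∩ B) := by
  have hY : Tendsto Y atTop (𝓝 cbar) := (tendsto_add_atTop_iff_nat 1).mp hy
  have hmemA : 0 < laminf → cbar ∈ A := fun hl =>
    hAclosed.mem_of_tendsto
      (tendsto_of_tendsto_sub_smul_add_smul hY hx hlaminf hl.ne' fun n => (hMARP n).2.1)
      (Eventually.of_forall fun n => (hMARP n).1.1)
  have hmemB : 0 < muinf → cbar ∈ B := fun hm =>
    hBclosed.mem_of_tendsto
      (tendsto_of_tendsto_sub_smul_add_smul hx hy hmuinf hm.ne' fun n => (hMARP n).2.2.2)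
      (Eventually.of_forall fun n => (hMARP n).2.2.1.1)
  exact ⟨hmemA, hmemB, fun h => ⟨hmemA (lt_min_iff.mp h).1, hmemB (lt_min_iff.mp h).2⟩⟩

/-- Proposition 5.4: location of the limit of the MARP. -/
theorem marp_limit_location
    {X : Type*} [NormedAddCommGroup X] [InnerProductSpace ℝ X] [FiniteDimensional ℝ X]
    (A B : Set X) (hA : A.Nonempty) (hAclosed : IsClosed A)
    (hB : B.Nonempty) (hBclosed : IsClosed B)
    (lam mu : ℕ → ℝ) (hlam : ∀ n, lam n ∈ Set.Ioc (0 : ℝ) 1)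
    (hmu : ∀ n, mu n ∈ Set.Ioc (0 : ℝ) 1)
    (laminf muinf : ℝ)
    (hlaminf : Tendsto lam atTop (nhds laminf)) (hmuinf : Tendsto mu atTop (nhds muinf))
    (a x b Y : ℕ → X) (hMARP : IsMARP A B lam mu a x b Y)
    (cbar : X) (hx : Tendsto x atTop (nhds cbar))
    (hy : Tendsto (fun n => Y (n + 1)) atTop (nhds cbar)) :
    (0 < laminf → cbar ∈ A) ∧
    (0 < muinf → cbar ∈ B) ∧
    (0 < min laminf muinf → cbar ∈ A ∩ B) :=
  marp_limit_location_general A B hAclosed hBclosed lam mu laminf muinf hlaminf hmuinf a x b Y hMARP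
    cbar hx hy
end

section
/- Let S ⊆ X be both A-projection absorbing and B-projection absorbing, let (λ_n) and (μ_n) be nonincreasing sequences in (0,1] with limits λ_∞ and μ_∞, set α_0 := max{λ_0, μ_0}, and let (a_n), (x_n), (b_n), (y_n) be MARP sequences with starting point y_{−1} ∈ S. Let r > 0, θ ∈ [0,1), and let ρ̂ be defined by ρ̂² := sup_{n∈ℕ} max{ (λ_{n+1}/λ_n)²·(λ_n² + (1−λ_n)² + 2θλ_n(1−λ_n)), (μ_{n+1}/μ_n)²·(μ_n² + (1−μ_n)² + 2θμ_n(1−μ_n)) }. Assume: (a) α_0 < 1; (b) ρ̂ ≤ ρ < 1; (c) max{d_A(y_{−1}), d_B(y_{−1})} ≤ r(1−ρ)/(2α_0(1+α_0)); and (d) for every x ∈ S with ‖x − y_{−1}‖ ≤ r, every a ∈ P_A(x) and every b ∈ P_B(x), one has ⟨a−x, x−b⟩ ≤ θ‖a−x‖·‖x−b‖. Then (x_n) and (y_n) converge linearly with rate ρ to a point c̄ with ‖c̄ − y_{−1}‖ ≤ r, and max{‖x_n − c̄‖, ‖y_n − c̄‖} ≤ (r(1+ρ)/2)·ρ^n for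 all n ∈ ℕ. Furthermore, if min{λ_∞, μ_∞} > 0, then c̄ ∈ A ∩ B. -/
open Filter Topology RealInnerProductSpace

/-- `S` is `A`-projection absorbing. -/
def ProjAbsorbing {X : Type*} [NormedAddCommGroup X] [NormedSpace ℝ X]
    (A S : Set X) : Prop :=
  ∀ s ∈ S, ∀ a ∈ projSet A s, segment ℝ s a ⊆ S

/-!
Write `uₙ = ‖xₙ - yₙ₋₁‖` and `vₙ = ‖yₙ - xₙ‖` for the lengths of the two relaxed half-steps.
Since `aₙ` is still a nearest point of `A` to `xₙ`, the next `A`-step from `yₙ` has length at most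
`λₙ₊₁ ‖yₙ - aₙ‖`, and expanding `‖(xₙ - aₙ) + (yₙ - xₙ)‖²` with the angle condition at `xₙ` and
`λₙ ‖xₙ - aₙ‖ = (1 - λₙ) uₙ` bounds it by `ρ̂ max(uₙ, vₙ)`; the `B`-step is symmetric. So
`max(uₙ, vₙ)` decays like `ρⁿ`, starting below `r (1 - ρ) / 2` by the distance assumption, and the
geometric sum of all steps never leaves the ball of radius `r` on which the angle condition holds.
Hence `(xₙ)` is Cauchy with rate `ρ`. If `λ∞, μ∞ > 0`, then `‖aₙ - yₙ₋₁‖ = uₙ / λₙ → 0` and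
likewise for `bₙ`, so the limit lies in the closed sets `A` and `B`.
-/

open Set Metric

section InnerProductSpace

variable {X : Type*} [NormedAddCommGroup X] [InnerProductSpace ℝ X]

/-- `relaxCoef θ λₙ λₙ₊₁` is the `λ`-term inside the supremum defining `ρ̂²`. -/
noncomputable def relaxCoef (θ t t' : ℝ) : ℝ :=
  (t' / t) ^ 2 * (t ^ 2 + (1 - t) ^ 2 + 2 * θ * t * (1 - t))

theorem relaxCoef_le_one {θ t t' : ℝ} (hθ : θ ∈ Icc (0 : ℝ) 1) (ht : t ∈ Ioc (0 : ℝ) 1)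
    (ht' : t' ∈ Icc 0 t) : relaxCoef θ t t' ≤ 1 := by
  obtain ⟨hθ0, hθ1⟩ := hθ
  obtain ⟨ht0, ht1⟩ := ht
  have hquot : (t' / t) ^ 2 ≤ 1 := by
    rw [sq_le_one_iff_abs_le_one, abs_le]
    constructor
    · exact (neg_one_lt_zero.trans_le (div_nonneg ht'.1 ht0.le)).le
    · exact (div_le_one ht0).mpr ht'.2
  have hK0 : 0 ≤ t ^ 2 + (1 - t) ^ 2 + 2 * θ * t * (1 - t) := by
    have := mul_nonneg (mul_nonneg hθ0 ht0.le) (sub_nonneg.mpr ht1)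
    nlinarith
  have hK1 : t ^ 2 + (1 - t) ^ 2 + 2 * θ * t * (1 - t) ≤ 1 := by
    have := mul_nonneg (mul_nonneg ht0.le (sub_nonneg.mpr ht1)) (sub_nonneg.mpr hθ1)
    nlinarith
  exact mul_le_one₀ hquot hK0 hK1

theorem relaxCoef_le_sq {θ ρ : ℝ} {lam mu : ℕ → ℝ} (hθ : θ ∈ Icc (0 : ℝ) 1)
    (hlam : ∀ n, lam n ∈ Ioc (0 : ℝ) 1) (hmu : ∀ n, mu n ∈ Ioc (0 : ℝ) 1)
    (hlam_mono : ∀ n, lam (n + 1) ≤ lam n) (hmu_mono : ∀ n, mu (n + 1) ≤ mu n)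
    (hρ : √(⨆ n, max (relaxCoef θ (lam n) (lam (n + 1))) (relaxCoef θ (mu n) (mu (n + 1)))) ≤ ρ)
    (n : ℕ) :
    relaxCoef θ (lam n) (lam (n + 1)) ≤ ρ ^ 2 ∧ relaxCoef θ (mu n) (mu (n + 1)) ≤ ρ ^ 2 := by
  have hbdd : BddAbove (range fun n ↦
      max (relaxCoef θ (lam n) (lam (n + 1))) (relaxCoef θ (mu n) (mu (n + 1)))) := by
    refine ⟨1, ?_⟩
    rintro _ ⟨n, rfl⟩
    exact max_le (relaxCoef_le_one hθ (hlam n) ⟨(hlam _).1.le, hlam_mono n⟩)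
      (relaxCoef_le_one hθ (hmu n) ⟨(hmu _).1.le, hmu_mono n⟩)
  exact max_le_iff.mp ((le_ciSup hbdd n).trans (Real.sqrt_le_iff.mp hρ).2)

theorem combo_mem_segment (y p : X) {t : ℝ} (ht : t ∈ Icc (0 : ℝ) 1) :
    (1 - t) • y + t • p ∈ segment ℝ y p :=
  ⟨1 - t, t, sub_nonneg.mpr ht.2, ht.1, sub_add_cancel 1 t, rfl⟩

theorem norm_combo_sub_left (y p : X) {t : ℝ} (ht : 0 ≤ t) :
    ‖(1 - t) • y + t • p - y‖ = t * ‖y - p‖ := by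
  rw [← AffineMap.lineMap_apply_module, ← dist_eq_norm, dist_lineMap_left, dist_eq_norm,
    Real.norm_of_nonneg ht]

theorem norm_combo_sub_right (y p : X) {t : ℝ} (ht : t ≤ 1) :
    ‖(1 - t) • y + t • p - p‖ = (1 - t) * ‖y - p‖ := by
  rw [← AffineMap.lineMap_apply_module, ← dist_eq_norm, dist_lineMap_right, dist_eq_norm,
    Real.norm_of_nonneg (sub_nonneg.mpr ht)]

theorem mem_projSet_combo {C : Set X} {y p : X} (hp : p ∈ projSet C y) {t : ℝ}
    (ht : t ∈ Icc (0 : ℝ) 1) : p ∈ projSet C ((1 - t) • y + t • p) := by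
  obtain ⟨hpC, hpy⟩ := hp
  refine ⟨hpC, le_antisymm ?_ (by simpa [dist_eq_norm] using infDist_le_dist_of_mem hpC)⟩
  have htri := infDist_le_infDist_add_dist (x := y) (y := (1 - t) • y + t • p) (s := C)
  rw [dist_eq_norm, norm_sub_rev, norm_combo_sub_left y p ht.1, ← hpy] at htri
  rw [norm_combo_sub_right y p ht.2]
  linarith

theorem sq_mul_norm_add_le {P Q : X} {θ t m : ℝ} (hθ : 0 ≤ θ) (ht : t ∈ Icc (0 : ℝ) 1)
    (hPQ : ⟪P, Q⟫ ≤ θ * ‖P‖ * ‖Q‖) (hP : t * ‖P‖ ≤ (1 - t) * m) (hQ : ‖Q‖ ≤ m) :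
    (t * ‖P + Q‖) ^ 2 ≤ (t ^ 2 + (1 - t) ^ 2 + 2 * θ * t * (1 - t)) * m ^ 2 := by
  obtain ⟨ht0, ht1⟩ := ht
  have htQ : t * ‖Q‖ ≤ t * m := mul_le_mul_of_nonneg_left hQ ht0
  have htP0 : 0 ≤ t * ‖P‖ := by positivity
  have htQ0 : 0 ≤ t * ‖Q‖ := by positivity
  have hprod : (t * ‖P‖) * (t * ‖Q‖) ≤ ((1 - t) * m) * (t * m) :=
    mul_le_mul hP htQ htQ0 (htP0.trans hP)
  calc (t * ‖P + Q‖) ^ 2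
      = (t * ‖P‖) ^ 2 + (t * ‖Q‖) ^ 2 + 2 * t ^ 2 * ⟪P, Q⟫ := by
        rw [mul_pow, norm_add_sq_real]; ring
    _ ≤ (t * ‖P‖) ^ 2 + (t * ‖Q‖) ^ 2 + 2 * θ * ((t * ‖P‖) * (t * ‖Q‖)) := by
        nlinarith [sq_nonneg t]
    _ ≤ ((1 - t) * m) ^ 2 + (t * m) ^ 2 + 2 * θ * (((1 - t) * m) * (t * m)) := by
        gcongr
    _ = (t ^ 2 + (1 - t) ^ 2 + 2 * θ * t * (1 - t)) * m ^ 2 := by ring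

theorem inner_le_of_combo {z p q : X} {s θ : ℝ} (hs : 0 ≤ s)
    (h : ⟪p - z, z - q⟫ ≤ θ * ‖p - z‖ * ‖z - q‖) :
    ⟪z - p, (1 - s) • z + s • q - z⟫ ≤ θ * ‖z - p‖ * ‖(1 - s) • z + s • q - z‖ := by
  have hw : (1 - s) • z + s • q - z = s • (q - z) := by module
  rw [hw, real_inner_smul_right, norm_smul, Real.norm_of_nonneg hs, norm_sub_rev z p,
    norm_sub_rev q z, ← neg_sub p z, ← neg_sub z q, inner_neg_neg]
  nlinarith

theorem mul_infDist_le_of_inner_le {C : Set X} {y p z w : X} {t t' θ ρ m : ℝ} (hp : p ∈ C)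
    (ht : t ∈ Ioc (0 : ℝ) 1) (ht' : 0 ≤ t') (hθ : 0 ≤ θ) (hρ : 0 ≤ ρ)
    (hz : z = (1 - t) • y + t • p) (hangle : ⟪z - p, w - z⟫ ≤ θ * ‖z - p‖ * ‖w - z‖)
    (hzy : ‖z - y‖ ≤ m) (hwz : ‖w - z‖ ≤ m) (hcoef : relaxCoef θ t t' ≤ ρ ^ 2) :
    t' * infDist w C ≤ ρ * m := by
  obtain ⟨ht0, ht1⟩ := ht
  have hzp : t * ‖z - p‖ ≤ (1 - t) * m := by
    rw [hz, norm_combo_sub_right y p ht1, mul_left_comm, ← norm_combo_sub_left y p ht0.le, ← hz]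
    exact mul_le_mul_of_nonneg_left hzy (sub_nonneg.mpr ht1)
  have hsq := sq_mul_norm_add_le hθ ⟨ht0.le, ht1⟩ hangle hzp hwz
  rw [sub_add_sub_cancel'] at hsq
  have hwp : (t' * ‖w - p‖) ^ 2 ≤ (ρ * m) ^ 2 :=
    calc (t' * ‖w - p‖) ^ 2 = (t' / t) ^ 2 * (t * ‖w - p‖) ^ 2 := by field_simp
      _ ≤ (t' / t) ^ 2 * ((t ^ 2 + (1 - t) ^ 2 + 2 * θ * t * (1 - t)) * m ^ 2) := by gcongr
      _ = relaxCoef θ t t' * m ^ 2 := by rw [relaxCoef]; ring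
      _ ≤ (ρ * m) ^ 2 := by rw [mul_pow]; gcongr
  have hm : 0 ≤ m := (norm_nonneg _).trans hwz
  calc t' * infDist w C ≤ t' * ‖w - p‖ := by
        gcongr; simpa [dist_eq_norm] using infDist_le_dist_of_mem hp
    _ ≤ ρ * m := (pow_le_pow_iff_left₀ (by positivity) (by positivity) two_ne_zero).mp hwp

def AngleCondition (θ : ℝ) (A B T : Set X) : Prop :=
  ∀ z ∈ T, ∀ p ∈ projSet A z, ∀ q ∈ projSet B z, ⟪p - z, z - q⟫ ≤ θ * ‖p - z‖ * ‖z - q‖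

theorem AngleCondition.symm {θ : ℝ} {A B T : Set X} (h : AngleCondition θ A B T) :
    AngleCondition θ B A T := by
  intro z hz q hq p hp
  calc ⟪q - z, z - p⟫ = ⟪p - z, z - q⟫ := by
        rw [real_inner_comm, ← neg_sub p z, ← neg_sub z q, inner_neg_neg]
    _ ≤ θ * ‖p - z‖ * ‖z - q‖ := h z hz p hp q hq
    _ = θ * ‖q - z‖ * ‖z - p‖ := by rw [norm_sub_rev p z, norm_sub_rev z q]; ring

end InnerProductSpace

theorem exists_limit_of_interleaved_geometric {E : Type*} [NormedAddCommGroup E] [CompleteSpace E]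
    {x y : ℕ → E} {r ρ : ℝ} (hr : 0 ≤ r) (hρ0 : 0 ≤ ρ) (hρ1 : ρ < 1)
    (hstep : ∀ n, max ‖x n - y n‖ ‖y (n + 1) - x n‖ ≤ r * (1 - ρ) / 2 * ρ ^ n) :
    ∃ c, ‖c - y 0‖ ≤ r ∧ ∀ n, max ‖x n - c‖ ‖y (n + 1) - c‖ ≤ r * (1 + ρ) / 2 * ρ ^ n := by
  have hu n : ‖x n - y n‖ ≤ r * (1 - ρ) / 2 * ρ ^ n := (le_max_left _ _).trans (hstep n)
  have hv n : ‖y (n + 1) - x n‖ ≤ r * (1 - ρ) / 2 * ρ ^ n := (le_max_right _ _).trans (hstep n)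
  have hdist n : dist (x n) (x (n + 1)) ≤ r * (1 - ρ) * (1 + ρ) / 2 * ρ ^ n := by
    rw [dist_comm, dist_eq_norm]
    have htri := norm_sub_le_norm_sub_add_norm_sub (x (n + 1)) (y (n + 1)) (x n)
    have hun := hu (n + 1)
    rw [pow_succ] at hun
    nlinarith [hv n]
  obtain ⟨c, hc⟩ := cauchySeq_tendsto_of_complete (cauchySeq_of_le_geometric ρ _ hρ1 hdist)
  have hxc n : ‖x n - c‖ ≤ r * (1 + ρ) / 2 * ρ ^ n := by
    rw [← dist_eq_norm]
    convert dist_le_of_le_geometric_of_tendsto ρ _ hρ1 hdist hc n using 1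
    field_simp [(sub_pos.mpr hρ1).ne']
  refine ⟨c, ?_, fun n ↦ max_le (hxc n) ?_⟩
  · have htri := norm_sub_le_norm_sub_add_norm_sub c (x 0) (y 0)
    rw [norm_sub_rev c (x 0)] at htri
    have hx0 := hxc 0
    have hu0 := hu 0
    rw [pow_zero, mul_one] at hx0 hu0
    linarith
  · have htri := norm_sub_le_norm_sub_add_norm_sub (y (n + 1)) (x (n + 1)) c
    rw [norm_sub_rev (y (n + 1)) (x (n + 1))] at htri
    have hxn := hxc (n + 1)
    have hun := hu (n + 1)
    rw [pow_succ] at hxn hun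
    nlinarith [mul_nonneg (mul_nonneg hr (pow_nonneg hρ0 n)) (sub_nonneg.mpr hρ1.le)]

theorem tendsto_of_norm_sub_le_geometric {E : Type*} [NormedAddCommGroup E] {z : ℕ → E} {c : E}
    {K ρ : ℝ} (hρ0 : 0 ≤ ρ) (hρ1 : ρ < 1) (hz : ∀ n, ‖z n - c‖ ≤ K * ρ ^ n) :
    Tendsto z atTop (𝓝 c) :=
  tendsto_iff_norm_sub_tendsto_zero.mpr <| squeeze_zero (fun _ ↦ norm_nonneg _) hz <| by
    simpa using (tendsto_pow_atTop_nhds_zero_of_lt_one hρ0 hρ1).const_mul K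

theorem mem_of_tendsto_combo {E : Type*} [NormedAddCommGroup E] [NormedSpace ℝ E] {C : Set E}
    (hC : IsClosed C) {y z p : ℕ → E} {t : ℕ → ℝ} {c : E} {t₀ : ℝ} (hp : ∀ n, p n ∈ C)
    (hz : ∀ n, z n = (1 - t n) • y n + t n • p n) (ht : ∀ n, t n ≠ 0)
    (htlim : Tendsto t atTop (𝓝 t₀)) (ht₀ : t₀ ≠ 0) (hy : Tendsto y atTop (𝓝 c))
    (hzlim : Tendsto z atTop (𝓝 c)) : c ∈ C := by
  have hp_eq n : p n = y n + (t n)⁻¹ • (z n - y n) := by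
    rw [hz n, show (1 - t n) • y n + t n • p n - y n = t n • (p n - y n) by module,
      inv_smul_smul₀ (ht n), add_sub_cancel]
  have hplim : Tendsto p atTop (𝓝 (c + t₀⁻¹ • (c - c))) :=
    (hy.add ((htlim.inv₀ ht₀).smul (hzlim.sub hy))).congr fun n ↦ (hp_eq n).symm
  rw [sub_self, smul_zero, add_zero] at hplim
  exact hC.mem_of_tendsto hplim (Eventually.of_forall hp)

namespace IsMARP

variable {X : Type*} [NormedAddCommGroup X] [InnerProductSpace ℝ X]
  {A B S T : Set X} {lam mu : ℕ → ℝ} {a x b Y : ℕ → X} {θ ρ r : ℝ}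

theorem mem_of_projAbsorbing (h : IsMARP A B lam mu a x b Y) (hSA : ProjAbsorbing A S)
    (hSB : ProjAbsorbing B S) (hlam : ∀ n, lam n ∈ Icc (0 : ℝ) 1)
    (hmu : ∀ n, mu n ∈ Icc (0 : ℝ) 1) (hstart : Y 0 ∈ S) (n : ℕ) : Y n ∈ S ∧ x n ∈ S := by
  have hx : ∀ n, Y n ∈ S → x n ∈ S := fun n hY ↦
    hSA _ hY _ (h n).1 ((h n).2.1 ▸ combo_mem_segment _ _ (hlam n))
  induction n with
  | zero => exact ⟨hstart, hx 0 hstart⟩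
  | succ n ih =>
    have hY := hSB _ ih.2 _ (h n).2.2.1 ((h n).2.2.2 ▸ combo_mem_segment _ _ (hmu n))
    exact ⟨hY, hx _ hY⟩

theorem norm_x_sub_Y (h : IsMARP A B lam mu a x b Y) {n : ℕ} (hlam : 0 ≤ lam n) :
    ‖x n - Y n‖ = lam n * infDist (Y n) A := by
  rw [(h n).2.1, norm_combo_sub_left _ _ hlam, (h n).1.2]

theorem norm_Y_succ_sub_x (h : IsMARP A B lam mu a x b Y) {n : ℕ} (hmu : 0 ≤ mu n) :
    ‖Y (n + 1) - x n‖ = mu n * infDist (x n) B := by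
  rw [(h n).2.2.2, norm_combo_sub_left _ _ hmu, (h n).2.2.1.2]

theorem first_steps_le (h : IsMARP A B lam mu a x b Y) (hlam : 0 ≤ lam 0) (hmu : 0 ≤ mu 0) :
    max ‖x 0 - Y 0‖ ‖Y 1 - x 0‖ ≤ max (lam 0) (mu 0) * (1 + max (lam 0) (mu 0)) *
      max (infDist (Y 0) A) (infDist (Y 0) B) := by
  set α := max (lam 0) (mu 0)
  set D := max (infDist (Y 0) A) (infDist (Y 0) B)
  have hα : 0 ≤ α := hlam.trans (le_max_left _ _)
  have hD : 0 ≤ D := infDist_nonneg.trans (le_max_left _ _)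
  have hu : ‖x 0 - Y 0‖ ≤ α * D := by
    rw [h.norm_x_sub_Y hlam]
    exact mul_le_mul (le_max_left _ _) (le_max_left _ _) infDist_nonneg hα
  have hv : ‖Y 1 - x 0‖ ≤ α * (D + α * D) := by
    rw [h.norm_Y_succ_sub_x hmu]
    refine mul_le_mul (le_max_right _ _) ?_ infDist_nonneg hα
    calc infDist (x 0) B ≤ infDist (Y 0) B + dist (x 0) (Y 0) := infDist_le_infDist_add_dist
      _ ≤ D + α * D := by rw [dist_eq_norm]; gcongr; exact le_max_right _ _
  refine max_le (hu.trans ?_) (hv.trans_eq (by ring))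
  nlinarith [mul_nonneg (mul_nonneg hα hα) hD]

theorem step_contraction (h : IsMARP A B lam mu a x b Y) (hlam : ∀ n, lam n ∈ Ioc (0 : ℝ) 1)
    (hmu : ∀ n, mu n ∈ Ioc (0 : ℝ) 1) (hθ : 0 ≤ θ) (hρ0 : 0 ≤ ρ) (hρ1 : ρ ≤ 1) {n : ℕ}
    (hcoefA : relaxCoef θ (lam n) (lam (n + 1)) ≤ ρ ^ 2)
    (hcoefB : relaxCoef θ (mu n) (mu (n + 1)) ≤ ρ ^ 2)
    (hCQ : AngleCondition θ A B T) (hx : x n ∈ T) (hY : Y (n + 1) ∈ T) :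
    max ‖x (n + 1) - Y (n + 1)‖ ‖Y (n + 2) - x (n + 1)‖ ≤
      ρ * max ‖x n - Y n‖ ‖Y (n + 1) - x n‖ := by
  set m := max ‖x n - Y n‖ ‖Y (n + 1) - x n‖
  have hax : a n ∈ projSet A (x n) :=
    (h n).2.1 ▸ mem_projSet_combo (h n).1 (Ioc_subset_Icc_self (hlam n))
  have hbY : b n ∈ projSet B (Y (n + 1)) :=
    (h n).2.2.2 ▸ mem_projSet_combo (h n).2.2.1 (Ioc_subset_Icc_self (hmu n))
  have hu : ‖x (n + 1) - Y (n + 1)‖ ≤ ρ * m := by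
    rw [h.norm_x_sub_Y (hlam _).1.le]
    refine mul_infDist_le_of_inner_le (h n).1.1 (hlam n) (hlam _).1.le hθ hρ0 (h n).2.1 ?_
      (le_max_left _ _) (le_max_right _ _) hcoefA
    rw [(h n).2.2.2]
    exact inner_le_of_combo (hmu n).1.le (hCQ _ hx _ hax _ (h n).2.2.1)
  have hv : ‖Y (n + 2) - x (n + 1)‖ ≤ ρ * m := by
    rw [h.norm_Y_succ_sub_x (hmu _).1.le]
    refine mul_infDist_le_of_inner_le (h n).2.2.1.1 (hmu n) (hmu _).1.le hθ hρ0 (h n).2.2.2 ?_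
      (le_max_right _ _) (hu.trans (mul_le_of_le_one_left (by positivity) hρ1)) hcoefB
    rw [(h (n + 1)).2.1]
    exact inner_le_of_combo (hlam _).1.le (hCQ.symm _ hY _ hbY _ (h (n + 1)).1)
  exact max_le hu hv

theorem steps_le (h : IsMARP A B lam mu a x b Y) (hlam : ∀ n, lam n ∈ Ioc (0 : ℝ) 1)
    (hmu : ∀ n, mu n ∈ Ioc (0 : ℝ) 1) (hθ : 0 ≤ θ) (hρ0 : 0 ≤ ρ) (hρ1 : ρ < 1)
    (hcoef : ∀ n, relaxCoef θ (lam n) (lam (n + 1)) ≤ ρ ^ 2 ∧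
      relaxCoef θ (mu n) (mu (n + 1)) ≤ ρ ^ 2)
    (hS : ∀ n, Y n ∈ S ∧ x n ∈ S) (hCQ : AngleCondition θ A B (S ∩ closedBall (Y 0) r))
    (h0 : max ‖x 0 - Y 0‖ ‖Y 1 - x 0‖ ≤ r * (1 - ρ) / 2) (n : ℕ) :
    max ‖x n - Y n‖ ‖Y (n + 1) - x n‖ ≤ r * (1 - ρ) / 2 * ρ ^ n := by
  set M := r * (1 - ρ) / 2 with hMdef
  have hM : 0 ≤ M := (le_max_left _ _).trans' (norm_nonneg _) |>.trans h0
  have hball {d : ℝ} (hd : (1 - ρ) * d ≤ 2 * M) : d ≤ r :=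
    le_of_mul_le_mul_left (hd.trans_eq (by rw [hMdef]; ring)) (sub_pos.mpr hρ1)
  -- the second conjunct keeps `x n` and `y n` in the ball where the angle condition holds
  suffices ∀ n, max ‖x n - Y n‖ ‖Y (n + 1) - x n‖ ≤ M * ρ ^ n ∧
      (1 - ρ) * ‖x n - Y 0‖ + (1 + ρ) * (M * ρ ^ n) ≤ 2 * M from (this n).1
  intro n
  induction n with
  | zero =>
    have hx0 : ‖x 0 - Y 0‖ ≤ M := (le_max_left _ _).trans h0
    refine ⟨by simpa using h0, ?_⟩
    nlinarith
  | succ n ih =>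
    obtain ⟨hstep, hinv⟩ := ih
    have hq : 0 ≤ M * ρ ^ n := by positivity
    have hu := (le_max_left _ _).trans hstep
    have hv := (le_max_right _ _).trans hstep
    have hxr : ‖x n - Y 0‖ ≤ r := hball (by nlinarith)
    have hYr : ‖Y (n + 1) - Y 0‖ ≤ r := hball <| by
      have := norm_sub_le_norm_sub_add_norm_sub (Y (n + 1)) (x n) (Y 0)
      nlinarith
    have hnext : max ‖x (n + 1) - Y (n + 1)‖ ‖Y (n + 2) - x (n + 1)‖ ≤ M * ρ ^ (n + 1) := by
      refine (h.step_contraction hlam hmu hθ hρ0 hρ1.le (hcoef n).1 (hcoef n).2 hCQ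
        ⟨(hS n).2, mem_closedBall_iff_norm.mpr hxr⟩
        ⟨(hS (n + 1)).1, mem_closedBall_iff_norm.mpr hYr⟩).trans ?_
      rw [pow_succ]
      nlinarith
    refine ⟨hnext, ?_⟩
    have htri : ‖x (n + 1) - Y 0‖ ≤ ‖x n - Y 0‖ + ‖Y (n + 1) - x n‖ + ‖x (n + 1) - Y (n + 1)‖ := by
      have := norm_sub_le_norm_sub_add_norm_sub (x (n + 1)) (Y (n + 1)) (Y 0)
      have := norm_sub_le_norm_sub_add_norm_sub (Y (n + 1)) (x n) (Y 0)
      linarith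
    have hu' := (le_max_left _ _).trans hnext
    rw [pow_succ] at hu' ⊢
    nlinarith

end IsMARP

theorem marp_local_linear_convergence_general
    {X : Type*} [NormedAddCommGroup X] [InnerProductSpace ℝ X] [FiniteDimensional ℝ X]
    (A B : Set X) (hAclosed : IsClosed A)
    (hBclosed : IsClosed B)
    (S : Set X) (hSA : ProjAbsorbing A S) (hSB : ProjAbsorbing B S)
    (lam mu : ℕ → ℝ) (hlam : ∀ n, lam n ∈ Set.Ioc (0 : ℝ) 1)
    (hmu : ∀ n, mu n ∈ Set.Ioc (0 : ℝ) 1)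
    (hlam_mono : ∀ n : ℕ, lam (n + 1) ≤ lam n) (hmu_mono : ∀ n : ℕ, mu (n + 1) ≤ mu n)
    (laminf muinf : ℝ)
    (hlaminf : Tendsto lam atTop (nhds laminf)) (hmuinf : Tendsto mu atTop (nhds muinf))
    (α₀ : ℝ) (hα₀ : α₀ = max (lam 0) (mu 0))
    (a x b Y : ℕ → X) (hMARP : IsMARP A B lam mu a x b Y) (hstart : Y 0 ∈ S)
    (r : ℝ) (hr : 0 < r) (θ : ℝ) (hθ : θ ∈ Set.Ico (0 : ℝ) 1)
    (ρhat : ℝ)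
    (hρhat : ρhat = Real.sqrt (⨆ n : ℕ, max
      ((lam (n + 1) / lam n) ^ 2 *
        ((lam n) ^ 2 + (1 - lam n) ^ 2 + 2 * θ * lam n * (1 - lam n)))
      ((mu (n + 1) / mu n) ^ 2 *
        ((mu n) ^ 2 + (1 - mu n) ^ 2 + 2 * θ * mu n * (1 - mu n)))))
    (ρ : ℝ) (hρhatρ : ρhat ≤ ρ) (hρlt : ρ < 1)
    (hdist : max (Metric.infDist (Y 0) A) (Metric.infDist (Y 0) B) ≤
      r * (1 - ρ) / (2 * α₀ * (1 + α₀)))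
    (hCQ : ∀ z ∈ S, ‖z - Y 0‖ ≤ r → ∀ p ∈ projSet A z, ∀ q ∈ projSet B z,
      ⟪p - z, z - q⟫ ≤ θ * ‖p - z‖ * ‖z - q‖) :
    ∃ cbar : X, ‖cbar - Y 0‖ ≤ r ∧
      (∀ n : ℕ, max (‖x n - cbar‖) (‖Y (n + 1) - cbar‖) ≤ r * (1 + ρ) / 2 * ρ ^ n) ∧
      (0 < min laminf muinf → cbar ∈ A ∩ B) := by
  have hρ0 : 0 ≤ ρ := (hρhat ▸ Real.sqrt_nonneg _).trans hρhatρ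
  have hcoef := relaxCoef_le_sq (Ico_subset_Icc_self hθ) hlam hmu hlam_mono hmu_mono
    (hρhat ▸ hρhatρ)
  have h0 : max ‖x 0 - Y 0‖ ‖Y 1 - x 0‖ ≤ r * (1 - ρ) / 2 := by
    have hα₀pos : 0 < α₀ := hα₀ ▸ (hlam 0).1.trans_le (le_max_left _ _)
    have hscaled := (le_div_iff₀ (by positivity)).mp hdist
    have hfirst := hMARP.first_steps_le (hlam 0).1.le (hmu 0).1.le
    rw [← hα₀] at hfirst
    nlinarith
  have hsteps := hMARP.steps_le hlam hmu hθ.1 hρ0 hρlt hcoef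
    (fun n ↦ hMARP.mem_of_projAbsorbing hSA hSB (fun n ↦ Ioc_subset_Icc_self (hlam n))
      (fun n ↦ Ioc_subset_Icc_self (hmu n)) hstart n)
    (fun z hz ↦ hCQ z hz.1 (mem_closedBall_iff_norm.mp hz.2)) h0
  obtain ⟨cbar, hcbar0, hcbar⟩ := exists_limit_of_interleaved_geometric hr.le hρ0 hρlt hsteps
  refine ⟨cbar, hcbar0, hcbar, fun hpos ↦ ?_⟩
  have hx : Tendsto x atTop (𝓝 cbar) :=
    tendsto_of_norm_sub_le_geometric hρ0 hρlt fun n ↦ (le_max_left _ _).trans (hcbar n)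
  have hY' : Tendsto (fun n ↦ Y (n + 1)) atTop (𝓝 cbar) :=
    tendsto_of_norm_sub_le_geometric hρ0 hρlt fun n ↦ (le_max_right _ _).trans (hcbar n)
  have hY : Tendsto Y atTop (𝓝 cbar) := (tendsto_add_atTop_iff_nat 1).mp hY'
  exact ⟨mem_of_tendsto_combo hAclosed (fun n ↦ (hMARP n).1.1) (fun n ↦ (hMARP n).2.1)
      (fun n ↦ (hlam n).1.ne') hlaminf (lt_min_iff.mp hpos).1.ne' hY hx,
    mem_of_tendsto_combo hBclosed (fun n ↦ (hMARP n).2.2.1.1) (fun n ↦ (hMARP n).2.2.2)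
      (fun n ↦ (hmu n).1.ne') hmuinf (lt_min_iff.mp hpos).2.ne' hx hY'⟩

/-- Theorem 5.8 (local linear convergence of the MARP). -/
theorem marp_local_linear_convergence
    {X : Type*} [NormedAddCommGroup X] [InnerProductSpace ℝ X] [FiniteDimensional ℝ X]
    (A B : Set X) (hA : A.Nonempty) (hAclosed : IsClosed A)
    (hB : B.Nonempty) (hBclosed : IsClosed B)
    (S : Set X) (hSA : ProjAbsorbing A S) (hSB : ProjAbsorbing B S)
    (lam mu : ℕ → ℝ) (hlam : ∀ n, lam n ∈ Set.Ioc (0 : ℝ) 1)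
    (hmu : ∀ n, mu n ∈ Set.Ioc (0 : ℝ) 1)
    (hlam_mono : ∀ n : ℕ, lam (n + 1) ≤ lam n) (hmu_mono : ∀ n : ℕ, mu (n + 1) ≤ mu n)
    (laminf muinf : ℝ)
    (hlaminf : Tendsto lam atTop (nhds laminf)) (hmuinf : Tendsto mu atTop (nhds muinf))
    (α₀ : ℝ) (hα₀ : α₀ = max (lam 0) (mu 0))
    (a x b Y : ℕ → X) (hMARP : IsMARP A B lam mu a x b Y) (hstart : Y 0 ∈ S)
    (r : ℝ) (hr : 0 < r) (θ : ℝ) (hθ : θ ∈ Set.Ico (0 : ℝ) 1)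
    (ρhat : ℝ)
    (hρhat : ρhat = Real.sqrt (⨆ n : ℕ, max
      ((lam (n + 1) / lam n) ^ 2 *
        ((lam n) ^ 2 + (1 - lam n) ^ 2 + 2 * θ * lam n * (1 - lam n)))
      ((mu (n + 1) / mu n) ^ 2 *
        ((mu n) ^ 2 + (1 - mu n) ^ 2 + 2 * θ * mu n * (1 - mu n)))))
    (hα₀lt : α₀ < 1)
    (ρ : ℝ) (hρhatρ : ρhat ≤ ρ) (hρlt : ρ < 1)
    (hdist : max (Metric.infDist (Y 0) A) (Metric.infDist (Y 0) B) ≤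
      r * (1 - ρ) / (2 * α₀ * (1 + α₀)))
    (hCQ : ∀ z ∈ S, ‖z - Y 0‖ ≤ r → ∀ p ∈ projSet A z, ∀ q ∈ projSet B z,
      ⟪p - z, z - q⟫ ≤ θ * ‖p - z‖ * ‖z - q‖) :
    ∃ cbar : X, ‖cbar - Y 0‖ ≤ r ∧
      (∀ n : ℕ, max (‖x n - cbar‖) (‖Y (n + 1) - cbar‖) ≤ r * (1 + ρ) / 2 * ρ ^ n) ∧
      (0 < min laminf muinf → cbar ∈ A ∩ B) :=
  marp_local_linear_convergence_general A B hAclosed hBclosed S hSA hSB lam mu hlam hmu hlam_mono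
    hmu_mono laminf muinf hlaminf hmuinf α₀ hα₀ a x b Y hMARP hstart r hr θ hθ ρhat hρhat ρ hρhatρ
    hρlt hdist hCQ
end

section
/- Suppose A and B are affine subspaces of X with A ∩ B ≠ ∅, and let S := aff(A ∪ B) be the affine span of A ∪ B. Let (λ_n) and (μ_n) be nonincreasing sequences in (0,1] with limits λ_∞ and μ_∞ satisfying 1 > max{λ_0, μ_0} ≥ min{λ_∞, μ_∞} > 0, and let y_{−1} ∈ S. Then there exists ρ ∈ (0,1) such that the MARP sequences (x_n) and (y_n) with starting point y_{−1} converge linearly with rate ρ to some point of A ∩ B. -/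
/-!
Translating by a point `c̄ ∈ A ∩ B` turns both MARP steps into relaxed projections
`R_λ = (1 - λ) id + λ P_L` onto the direction spaces `L_A`, `L_B`, and
`‖R_λ w‖² = ‖w‖² - λ (2 - λ) ‖w - P_L w‖²`. Taking `c̄` to be the projection of `y_{-1}` onto
`A ∩ B` puts `y_{-1} - c̄` in `(L_A ⊓ L_B)ᗮ`, which both relaxed projections preserve and on which
their composition is a strict contraction for `λ, μ ∈ (0, 2)`. Since the parameters stay in the
compact box `[λ_∞, λ_0] × [μ_∞, μ_0]`, compactness of the box and of the unit sphere of
`(L_A ⊓ L_B)ᗮ` gives a uniform rate `ρ < 1`.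
-/

open Filter Topology

open scoped RealInnerProductSpace

lemma mem_Icc_of_antitone_of_tendsto {α : Type*} [TopologicalSpace α] [Preorder α]
    [OrderClosedTopology α] {f : ℕ → α} {a : α} (hf : Antitone f)
    (ha : Tendsto f atTop (𝓝 a)) (n : ℕ) : f n ∈ Set.Icc a (f 0) :=
  ⟨hf.le_of_tendsto ha n, hf (Nat.zero_le n)⟩

lemma norm_le_pow_mul_of_forall_norm_apply_le {E : Type*} [SeminormedAddCommGroup E]
    {T : ℕ → E → E} {e : ℕ → E} {W : Set E} {ρ : ℝ} (hρ : 0 ≤ ρ)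
    (hTW : ∀ n, ∀ w ∈ W, T n w ∈ W) (hT : ∀ n, ∀ w ∈ W, ‖T n w‖ ≤ ρ * ‖w‖)
    (he : ∀ n, e (n + 1) = T n (e n)) (he0 : e 0 ∈ W) (n : ℕ) :
    ‖e n‖ ≤ ‖e 0‖ * ρ ^ n := by
  have hmem : ∀ n, e n ∈ W := fun n => by
    induction n with
    | zero => exact he0
    | succ n ih => exact he n ▸ hTW n _ ih
  induction n with
  | zero => simp
  | succ n ih =>
    calc ‖e (n + 1)‖ ≤ ρ * ‖e n‖ := he n ▸ hT n _ (hmem n)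
      _ ≤ ρ * (‖e 0‖ * ρ ^ n) := mul_le_mul_of_nonneg_left ih hρ
      _ = ‖e 0‖ * ρ ^ (n + 1) := by ring

lemma Submodule.image_add_left_eq_of_mem {R M : Type*} [Ring R] [AddCommGroup M] [Module R M]
    {L : Submodule R M} {v c : M} (hc : c ∈ (v + ·) '' (L : Set M)) :
    (v + ·) '' (L : Set M) = (c + ·) '' (L : Set M) := by
  obtain ⟨l, hl, rfl⟩ := hc
  ext z
  simp only [Set.image_add_left, Set.mem_preimage, SetLike.mem_coe]
  rw [← L.sub_mem_iff_left hl]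
  abel_nf

lemma Submodule.add_mem_image_add_left {R M : Type*} [Ring R] [AddCommGroup M] [Module R M]
    {L : Submodule R M} {v c w : M} (hc : c ∈ (v + ·) '' (L : Set M)) (hw : w ∈ L) :
    c + w ∈ (v + ·) '' (L : Set M) := by
  rw [image_add_left_eq_of_mem hc]
  exact ⟨w, hw, rfl⟩

section InnerProductSpace

variable {X : Type*} [NormedAddCommGroup X] [InnerProductSpace ℝ X]

lemma eq_add_starProjection_of_mem_projSet {L : Submodule ℝ X} [L.HasOrthogonalProjection]
    {c y u : X} (hu : u ∈ projSet ((c + ·) '' (L : Set X)) y) :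
    u = c + L.starProjection (y - c) := by
  obtain ⟨⟨w, hw, rfl⟩, hmin⟩ := hu
  set q := c + L.starProjection (y - c)
  have hq : q ∈ (c + ·) '' (L : Set X) := ⟨_, L.starProjection_apply_mem _, rfl⟩
  have hle : ‖y - (c + w)‖ ≤ ‖y - q‖ := by
    rw [hmin, ← dist_eq_norm]
    exact Metric.infDist_le_dist_of_mem hq
  have hpyth : ‖y - (c + w)‖ ^ 2 = ‖y - q‖ ^ 2 + ‖q - (c + w)‖ ^ 2 := by
    have horth : ⟪y - q, q - (c + w)⟫ = 0 := by
      have hyq : y - q = y - c - L.starProjection (y - c) := by simp only [q]; abel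
      have hqw : q - (c + w) = L.starProjection (y - c) - w := by simp only [q]; abel
      rw [hyq, hqw]
      exact L.starProjection_inner_eq_zero _ _ (L.sub_mem (L.starProjection_apply_mem _) hw)
    rw [← sub_add_sub_cancel y q (c + w), norm_add_sq_real, horth]
    ring
  have hqw : ‖q - (c + w)‖ = 0 := by
    nlinarith [norm_nonneg (q - (c + w)), norm_nonneg (y - q), norm_nonneg (y - (c + w))]
  exact (sub_eq_zero.1 (norm_eq_zero.1 hqw)).symm

namespace Submodule

noncomputable def relaxedProjection (L : Submodule ℝ X) [L.HasOrthogonalProjection] (l : ℝ) :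
    X →L[ℝ] X :=
  (1 - l) • 1 + l • L.starProjection

variable (L : Submodule ℝ X) [L.HasOrthogonalProjection]

lemma relaxedProjection_apply (l : ℝ) (w : X) :
    L.relaxedProjection l w = (1 - l) • w + l • L.starProjection w := rfl

lemma continuous_relaxedProjection : Continuous L.relaxedProjection := by
  unfold relaxedProjection
  fun_prop

lemma relaxedProjection_apply_of_mem (l : ℝ) {w : X} (hw : w ∈ L) :
    L.relaxedProjection l w = w := by
  rw [relaxedProjection_apply, starProjection_eq_self_iff.2 hw]
  module

lemma norm_relaxedProjection_apply_sq (l : ℝ) (w : X) :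
    ‖L.relaxedProjection l w‖ ^ 2 =
      ‖w‖ ^ 2 - l * (2 - l) * ‖w - L.starProjection w‖ ^ 2 := by
  have horth : ⟪w - L.starProjection w, L.starProjection w⟫ = 0 :=
    L.starProjection_inner_eq_zero w _ (L.starProjection_apply_mem w)
  have hsplit : L.relaxedProjection l w =
      (1 - l) • (w - L.starProjection w) + L.starProjection w := by
    rw [relaxedProjection_apply]
    module
  have hw := norm_add_sq_real (w - L.starProjection w) (L.starProjection w)
  rw [sub_add_cancel, horth] at hw
  rw [hsplit, norm_add_sq_real, real_inner_smul_left, horth, hw, norm_smul, mul_pow,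
    Real.norm_eq_abs, sq_abs]
  ring

lemma norm_relaxedProjection_apply_le {l : ℝ} (hl₀ : 0 ≤ l) (hl₂ : l ≤ 2) (w : X) :
    ‖L.relaxedProjection l w‖ ≤ ‖w‖ := by
  have hdrop : 0 ≤ l * (2 - l) * ‖w - L.starProjection w‖ ^ 2 := by
    have : 0 ≤ 2 - l := by linarith
    positivity
  rw [← pow_le_pow_iff_left₀ (norm_nonneg _) (norm_nonneg _) two_ne_zero,
    norm_relaxedProjection_apply_sq]
  linarith

lemma norm_relaxedProjection_apply_lt {l : ℝ} (hl₀ : 0 < l) (hl₂ : l < 2) {w : X}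
    (hw : w ∉ L) :
    ‖L.relaxedProjection l w‖ < ‖w‖ := by
  have hdist : 0 < ‖w - L.starProjection w‖ :=
    norm_pos_iff.2 (sub_ne_zero.2 fun h => hw (starProjection_eq_self_iff.1 h.symm))
  have hdrop : 0 < l * (2 - l) * ‖w - L.starProjection w‖ ^ 2 := by
    have : 0 < 2 - l := by linarith
    positivity
  rw [← pow_lt_pow_iff_left₀ (norm_nonneg _) (norm_nonneg _) two_ne_zero,
    norm_relaxedProjection_apply_sq]
  linarith

lemma relaxedProjection_mem_orthogonal {M : Submodule ℝ X} (hML : M ≤ L) (l : ℝ) {w : X}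
    (hw : w ∈ Mᗮ) : L.relaxedProjection l w ∈ Mᗮ := by
  have hPw : L.starProjection w ∈ Mᗮ := (mem_orthogonal M _).2 fun z hz => by
    rw [← inner_starProjection_left_eq_right, starProjection_eq_self_iff.2 (hML hz)]
    exact hw z hz
  exact Mᗮ.add_mem (Mᗮ.smul_mem _ hw) (Mᗮ.smul_mem _ hPw)

variable {L}

lemma norm_relaxedProjection_comp_lt {L' : Submodule ℝ X} [L'.HasOrthogonalProjection]
    {l m : ℝ} (hl₀ : 0 < l) (hl₂ : l < 2) (hm₀ : 0 < m) (hm₂ : m < 2) {v : X}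
    (hv : v ∈ (L ⊓ L')ᗮ) (hv₀ : v ≠ 0) :
    ‖L'.relaxedProjection m (L.relaxedProjection l v)‖ < ‖v‖ := by
  by_cases hvL : v ∈ L
  · have hvL' : v ∉ L' := fun hvL' =>
      hv₀ ((disjoint_def.1 (orthogonal_disjoint (L ⊓ L'))) v ⟨hvL, hvL'⟩ hv)
    rw [relaxedProjection_apply_of_mem L l hvL]
    exact L'.norm_relaxedProjection_apply_lt hm₀ hm₂ hvL'
  · exact (L'.norm_relaxedProjection_apply_le hm₀.le hm₂.le _).trans_lt
      (L.norm_relaxedProjection_apply_lt hl₀ hl₂ hvL)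

end Submodule

lemma exists_lt_one_forall_norm_apply_le_of_isCompact [FiniteDimensional ℝ X]
    {P : Type*} [TopologicalSpace P] {K : Set P} (hK : IsCompact K) {T : P → X →L[ℝ] X}
    (hT : Continuous T) {W : Submodule ℝ X} (hlt : ∀ p ∈ K, ∀ v ∈ W, v ≠ 0 → ‖T p v‖ < ‖v‖) :
    ∃ ρ ∈ Set.Ioo (0 : ℝ) 1, ∀ p ∈ K, ∀ v ∈ W, ‖T p v‖ ≤ ρ * ‖v‖ := by
  set S := K ×ˢ (Metric.sphere (0 : X) 1 ∩ W)
  have hS : IsCompact S :=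
    hK.prod ((isCompact_sphere 0 1).inter_right W.closed_of_finiteDimensional)
  have hf : Continuous fun q : P × X => ‖T q.1 q.2‖ :=
    ((hT.comp continuous_fst).clm_apply continuous_snd).norm
  obtain ⟨r, hr₁, hr⟩ : ∃ r < 1, ∀ q ∈ S, ‖T q.1 q.2‖ ≤ r := by
    rcases S.eq_empty_or_nonempty with hempty | hne
    · exact ⟨0, one_pos, by simp [hempty]⟩
    · obtain ⟨q, ⟨hqK, hqsphere, hqW⟩, hmax⟩ := hS.exists_isMaxOn hne hf.continuousOn
      have hq₁ : ‖q.2‖ = 1 := mem_sphere_zero_iff_norm.1 hqsphere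
      refine ⟨_, ?_, fun q' hq' => hmax hq'⟩
      have hq₀ : q.2 ≠ 0 := norm_ne_zero_iff.1 (hq₁ ▸ one_ne_zero)
      simpa [hq₁] using hlt q.1 hqK q.2 hqW hq₀
  refine ⟨max r (1 / 2), ⟨by positivity, max_lt hr₁ (by norm_num)⟩, fun p hp v hv => ?_⟩
  rcases eq_or_ne v 0 with rfl | hv₀
  · simp
  have hnv : 0 < ‖v‖ := norm_pos_iff.2 hv₀
  have hunit : ‖T p (‖v‖⁻¹ • v)‖ ≤ r :=
    hr (p, ‖v‖⁻¹ • v) ⟨hp, by simp [norm_smul, hnv.ne'], W.smul_mem _ hv⟩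
  rw [map_smul, norm_smul, norm_inv, norm_norm, inv_mul_le_iff₀ hnv] at hunit
  calc ‖T p v‖ ≤ ‖v‖ * r := hunit
    _ ≤ max r (1 / 2) * ‖v‖ := by rw [mul_comm]; gcongr; exact le_max_left _ _

lemma exists_lt_one_forall_norm_relaxedProjection_comp_le [FiniteDimensional ℝ X]
    (L L' : Submodule ℝ X) {l₀ l₁ m₀ m₁ : ℝ} (hl₀ : 0 < l₀) (hl₁ : l₁ < 2) (hm₀ : 0 < m₀)
    (hm₁ : m₁ < 2) :
    ∃ ρ ∈ Set.Ioo (0 : ℝ) 1, ∀ l ∈ Set.Icc l₀ l₁, ∀ m ∈ Set.Icc m₀ m₁, ∀ v ∈ (L ⊓ L')ᗮ,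
      ‖L'.relaxedProjection m (L.relaxedProjection l v)‖ ≤ ρ * ‖v‖ := by
  have hT : Continuous fun p : ℝ × ℝ =>
      (L'.relaxedProjection p.2).comp (L.relaxedProjection p.1) :=
    (L'.continuous_relaxedProjection.comp continuous_snd).clm_comp
      (L.continuous_relaxedProjection.comp continuous_fst)
  obtain ⟨ρ, hρ, hbound⟩ := exists_lt_one_forall_norm_apply_le_of_isCompact
    (isCompact_Icc.prod isCompact_Icc) hT (W := (L ⊓ L')ᗮ)
    fun p ⟨hl, hm⟩ v hv hv₀ => Submodule.norm_relaxedProjection_comp_lt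
      (hl₀.trans_le hl.1) (hl.2.trans_lt hl₁) (hm₀.trans_le hm.1) (hm.2.trans_lt hm₁) hv hv₀
  exact ⟨ρ, hρ, fun l hl m hm v hv => hbound (l, m) ⟨hl, hm⟩ v hv⟩

lemma IsMARP.sub_eq_relaxedProjection {L L' : Submodule ℝ X} [L.HasOrthogonalProjection]
    [L'.HasOrthogonalProjection] {v v' c : X} {lam mu : ℕ → ℝ} {a x b Y : ℕ → X}
    (h : IsMARP ((v + ·) '' (L : Set X)) ((v' + ·) '' (L' : Set X)) lam mu a x b Y)
    (hc : c ∈ (v + ·) '' (L : Set X)) (hc' : c ∈ (v' + ·) '' (L' : Set X)) (n : ℕ) :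
    x n - c = L.relaxedProjection (lam n) (Y n - c) ∧
      Y (n + 1) - c = L'.relaxedProjection (mu n) (x n - c) := by
  obtain ⟨ha, hx, hb, hY⟩ := h n
  rw [Submodule.image_add_left_eq_of_mem hc] at ha
  rw [Submodule.image_add_left_eq_of_mem hc'] at hb
  constructor
  · rw [hx, eq_add_starProjection_of_mem_projSet ha, Submodule.relaxedProjection_apply]
    module
  · rw [hY, eq_add_starProjection_of_mem_projSet hb, Submodule.relaxedProjection_apply]
    module

end InnerProductSpace

theorem marp_two_affine_subspaces_general
    {X : Type*} [NormedAddCommGroup X] [InnerProductSpace ℝ X] [FiniteDimensional ℝ X]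
    (A B : Set X)
    (hAaff : ∃ (v : X) (L : Submodule ℝ X), A = (fun w => v + w) '' (L : Set X))
    (hBaff : ∃ (v : X) (L : Submodule ℝ X), B = (fun w => v + w) '' (L : Set X))
    (hAB : (A ∩ B).Nonempty)
    (lam mu : ℕ → ℝ)
    (hlam_mono : ∀ n : ℕ, lam (n + 1) ≤ lam n) (hmu_mono : ∀ n : ℕ, mu (n + 1) ≤ mu n)
    (laminf muinf : ℝ)
    (hlaminf : Tendsto lam atTop (nhds laminf)) (hmuinf : Tendsto mu atTop (nhds muinf))
    (hα₀lt : max (lam 0) (mu 0) < 1) (hαinf : 0 < min laminf muinf)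
    (a x b Y : ℕ → X) (hMARP : IsMARP A B lam mu a x b Y) :
    ∃ ρ : ℝ, ρ ∈ Set.Ioo (0 : ℝ) 1 ∧
      ∃ cbar ∈ A ∩ B, ∃ M : ℝ, 0 ≤ M ∧
        ∀ n : ℕ, max (‖x n - cbar‖) (‖Y (n + 1) - cbar‖) ≤ M * ρ ^ n := by
  obtain ⟨c, hcA, hcB⟩ := hAB
  obtain ⟨vA, LA, rfl⟩ := hAaff
  obtain ⟨vB, LB, rfl⟩ := hBaff
  set cbar := c + (LA ⊓ LB).starProjection (Y 0 - c)
  have hcbarA : cbar ∈ (vA + ·) '' (LA : Set X) :=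
    Submodule.add_mem_image_add_left hcA
      (inf_le_left (a := LA) (Submodule.starProjection_apply_mem _ _))
  have hcbarB : cbar ∈ (vB + ·) '' (LB : Set X) :=
    Submodule.add_mem_image_add_left hcB
      (inf_le_right (a := LA) (Submodule.starProjection_apply_mem _ _))
  have hstep := hMARP.sub_eq_relaxedProjection hcbarA hcbarB
  have hlam := mem_Icc_of_antitone_of_tendsto (antitone_nat_of_succ_le hlam_mono) hlaminf
  have hmu := mem_Icc_of_antitone_of_tendsto (antitone_nat_of_succ_le hmu_mono) hmuinf
  obtain ⟨hlam₀, hmu₀⟩ := max_lt_iff.1 hα₀lt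
  obtain ⟨hlaminf₀, hmuinf₀⟩ := lt_min_iff.1 hαinf
  obtain ⟨ρ, hρ, hcontr⟩ := exists_lt_one_forall_norm_relaxedProjection_comp_le LA LB
    hlaminf₀ (hlam₀.trans one_lt_two) hmuinf₀ (hmu₀.trans one_lt_two)
  have hdecay (n : ℕ) : ‖Y n - cbar‖ ≤ ‖Y 0 - cbar‖ * ρ ^ n :=
    norm_le_pow_mul_of_forall_norm_apply_le (e := (Y · - cbar)) (W := ((LA ⊓ LB)ᗮ : Set X))
      hρ.1.le
      (fun _ _ hw => LB.relaxedProjection_mem_orthogonal inf_le_right _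
        (LA.relaxedProjection_mem_orthogonal inf_le_left _ hw))
      (fun n w hw => hcontr _ (hlam n) _ (hmu n) w hw)
      (fun n => by rw [(hstep n).2, (hstep n).1])
      (by rw [sub_add_eq_sub_sub]; exact Submodule.sub_starProjection_mem_orthogonal _) n
  refine ⟨ρ, hρ, cbar, ⟨hcbarA, hcbarB⟩, ‖Y 0 - cbar‖, norm_nonneg _, fun n => ?_⟩
  refine max_le ?_ ((hdecay (n + 1)).trans ?_)
  · rw [(hstep n).1]
    exact (LA.norm_relaxedProjection_apply_le (hlaminf₀.le.trans (hlam n).1)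
      ((hlam n).2.trans (hlam₀.trans one_lt_two).le) _).trans (hdecay n)
  · exact mul_le_mul_of_nonneg_left (pow_le_pow_of_le_one hρ.1.le hρ.2.le n.le_succ)
      (norm_nonneg _)

/-- Example 5.11 (two affine subspaces): the MARP converges linearly to a point
of the intersection. -/
theorem marp_two_affine_subspaces
    {X : Type*} [NormedAddCommGroup X] [InnerProductSpace ℝ X] [FiniteDimensional ℝ X]
    (A B : Set X)
    (hAaff : ∃ (v : X) (L : Submodule ℝ X), A = (fun w => v + w) '' (L : Set X))
    (hBaff : ∃ (v : X) (L : Submodule ℝ X), B = (fun w => v + w) '' (L : Set X))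
    (hAB : (A ∩ B).Nonempty)
    (S : Set X) (hS : S = (affineSpan ℝ (A ∪ B) : Set X))
    (lam mu : ℕ → ℝ) (hlam : ∀ n, lam n ∈ Set.Ioc (0 : ℝ) 1)
    (hmu : ∀ n, mu n ∈ Set.Ioc (0 : ℝ) 1)
    (hlam_mono : ∀ n : ℕ, lam (n + 1) ≤ lam n) (hmu_mono : ∀ n : ℕ, mu (n + 1) ≤ mu n)
    (laminf muinf : ℝ)
    (hlaminf : Tendsto lam atTop (nhds laminf)) (hmuinf : Tendsto mu atTop (nhds muinf))
    (hα₀lt : max (lam 0) (mu 0) < 1) (hαinf : 0 < min laminf muinf)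
    (a x b Y : ℕ → X) (hMARP : IsMARP A B lam mu a x b Y) (hstart : Y 0 ∈ S) :
    ∃ ρ : ℝ, ρ ∈ Set.Ioo (0 : ℝ) 1 ∧
      ∃ cbar ∈ A ∩ B, ∃ M : ℝ, 0 ≤ M ∧
        ∀ n : ℕ, max (‖x n - cbar‖) (‖Y (n + 1) - cbar‖) ≤ M * ρ ^ n :=
  marp_two_affine_subspaces_general A B hAaff hBaff hAB lam mu hlam_mono hmu_mono laminf muinf
    hlaminf hmuinf hα₀lt hαinf a x b Y hMARP
end

section
/- Let a > 0, b > 0 and c < 0 be real numbers satisfying max{a, b − 2a} < −c < √(a² + (b−a)²) < b, and let A := {a, c} and B := {b, c} as subsets of ℝ. Then the MAP sequences starting from y_{−1} = 0 (i.e., the MARP sequences with λ_n = μ_n = 1 for all n) satisfy x_n = a and y_n = b for every n ∈ ℕ; in particular, they do not converge to the unique point c of A ∩ B. -/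
/-!
Starting from `0`, the point `a` is strictly nearer than `c`, so the MAP lands on `a`; from `a`
the point `b` is strictly nearer than `c` because `b - 2a < -c`, and from `b` the point `a` is
strictly nearer than `c` because `c < a`. All projections are therefore single-valued along the
orbit, which is forced to alternate between `a` and `b` and never approaches `c`.
-/

open Filter Topology

section

variable {X : Type*} [NormedAddCommGroup X]

lemma eq_of_mem_projSet_pair {p q y z : X} (h : ‖y - p‖ < ‖y - q‖)
    (hz : z ∈ projSet {p, q} y) : z = p := by
  obtain ⟨rfl | rfl, hdist⟩ := hz
  · rfl
  · have hle : Metric.infDist y ({p, z} : Set X) ≤ ‖y - p‖ := by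
      rw [← dist_eq_norm]
      exact Metric.infDist_le_dist_of_mem (by simp)
    exact absurd (hdist ▸ hle) h.not_ge

variable [NormedSpace ℝ X]

lemma IsMARP.mem_projSet_of_MAP {A B : Set X} {a x b Y : ℕ → X}
    (h : IsMARP A B (fun _ => 1) (fun _ => 1) a x b Y) (n : ℕ) :
    x n ∈ projSet A (Y n) ∧ Y (n + 1) ∈ projSet B (x n) := by
  obtain ⟨ha, hx, hb, hY⟩ := h n
  simp only [sub_self, zero_smul, one_smul, zero_add] at hx hY
  exact ⟨hx ▸ ha, hY ▸ hx ▸ hb⟩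

lemma IsMARP.cycle_of_MAP {A B : Set X} {a x b Y : ℕ → X} {p r : X}
    (h : IsMARP A B (fun _ => 1) (fun _ => 1) a x b Y)
    (hstart : ∀ z ∈ projSet A (Y 0), z = p) (hpr : ∀ z ∈ projSet B p, z = r)
    (hrp : ∀ z ∈ projSet A r, z = p) (n : ℕ) :
    x n = p ∧ Y (n + 1) = r := by
  induction n with
  | zero =>
    obtain ⟨hx, hY⟩ := h.mem_projSet_of_MAP 0
    have hxp := hstart _ hx
    exact ⟨hxp, hpr _ (hxp ▸ hY)⟩
  | succ n ih =>
    obtain ⟨hx, hY⟩ := h.mem_projSet_of_MAP (n + 1)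
    have hxp := hrp _ (ih.2 ▸ hx)
    exact ⟨hxp, hpr _ (hxp ▸ hY)⟩

end

lemma not_tendsto_nhds_of_eq_const {α X : Type*} [TopologicalSpace X] [T2Space X]
    {l : Filter α} [l.NeBot] {f : α → X} {p c : X} (hf : ∀ n, f n = p) (hpc : p ≠ c) :
    ¬ Tendsto f l (𝓝 c) := fun h =>
  hpc (tendsto_nhds_unique (tendsto_const_nhds.congr fun n => (hf n).symm) h)

theorem map_cycles_two_doubletons_general
    (a b c : ℝ) (ha : 0 < a) (hb : 0 < b) (hc : c < 0)
    (h1 : max a (b - 2 * a) < -c)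
    (A B : Set ℝ) (hA : A = {a, c}) (hB : B = {b, c})
    (aa xx bb Y : ℕ → ℝ)
    (hMARP : IsMARP A B (fun _ => 1) (fun _ => 1) aa xx bb Y)
    (hstart : Y 0 = 0) :
    (∀ n : ℕ, xx n = a ∧ Y (n + 1) = b) ∧
    ¬ Tendsto xx atTop (nhds c) ∧ ¬ Tendsto (fun n => Y (n + 1)) atTop (nhds c) := by
  have hac : a < -c := (le_max_left _ _).trans_lt h1
  have hb2a : b - 2 * a < -c := (le_max_right _ _).trans_lt h1
  subst hA hB
  have cycle := hMARP.cycle_of_MAP (p := a) (r := b)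
    (fun z hz => eq_of_mem_projSet_pair (by
      rw [hstart, zero_sub, zero_sub, norm_neg, norm_neg, Real.norm_eq_abs, Real.norm_eq_abs,
        abs_of_pos ha, abs_of_neg hc]
      exact hac) hz)
    (fun z hz => eq_of_mem_projSet_pair (by
      rw [Real.norm_eq_abs, Real.norm_eq_abs, abs_of_pos (a := a - c) (by linarith),
        abs_sub_lt_iff]
      constructor <;> linarith) hz)
    (fun z hz => eq_of_mem_projSet_pair (by
      rw [Real.norm_eq_abs, Real.norm_eq_abs, abs_of_pos (a := b - c) (by linarith),
        abs_sub_lt_iff]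
      constructor <;> linarith) hz)
  exact ⟨cycle, not_tendsto_nhds_of_eq_const (fun n => (cycle n).1) (by linarith),
    not_tendsto_nhds_of_eq_const (fun n => (cycle n).2) (by linarith)⟩

/-- Proposition 7.2(i): the MAP cycles between `a` and `b`. -/
theorem map_cycles_two_doubletons
    (a b c : ℝ) (ha : 0 < a) (hb : 0 < b) (hc : c < 0)
    (h1 : max a (b - 2 * a) < -c)
    (h2 : -c < Real.sqrt (a ^ 2 + (b - a) ^ 2))
    (h3 : Real.sqrt (a ^ 2 + (b - a) ^ 2) < b)
    (A B : Set ℝ) (hA : A = {a, c}) (hB : B = {b, c})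
    (aa xx bb Y : ℕ → ℝ)
    (hMARP : IsMARP A B (fun _ => 1) (fun _ => 1) aa xx bb Y)
    (hstart : Y 0 = 0) :
    (∀ n : ℕ, xx n = a ∧ Y (n + 1) = b) ∧
    ¬ Tendsto xx atTop (nhds c) ∧ ¬ Tendsto (fun n => Y (n + 1)) atTop (nhds c) :=
  map_cycles_two_doubletons_general a b c ha hb hc h1 A B hA hB aa xx bb Y hMARP hstart
end

section
/- Let a > 0, b > 0 and c < 0 be real numbers satisfying max{a, b − 2a} < −c < √(a² + (b−a)²) < b, and let A := {a, c} and B := {b, c} as subsets of ℝ. Fix λ in the (nonempty) open interval ( (a + c + √(c² − a²))/(2a), (b + c)/(2a) ) ⊆ (0,1), and let λ_n = μ_n = λ for every n. Then the MARP sequences (x_n) and (y_n) with starting point y_{−1} = 0 converge linearly to c with rate 1 − λ; in particular they converge to the unique point of A ∩ B. -/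
/-!
After the first projection onto `A` (which picks `a`, as `a < -c`), every later projection onto
either set picks the common point `c`: the lower bound on `λ` keeps the `y`-iterates strictly
below the midpoint of `c` and `a`, and the upper bound keeps the `x`-iterates below the midpoint
of `c` and `b`. Each relaxed half-step then multiplies the distance to `c` by `1 - λ`, so
`x_n - c = (1 - λ)^(2n) (λa - c)` and `y_n - c = (1 - λ)^(2n+1) (λa - c)`.
-/

open Filter Topology

lemma eq_left_of_mem_projSet_pair {X : Type*} [NormedAddCommGroup X] {p q v u : X}
    (hu : u ∈ projSet {p, q} v) (hlt : ‖v - p‖ < ‖v - q‖) : u = p := by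
  obtain ⟨hmem, hdist⟩ := hu
  rcases hmem with rfl | rfl
  · rfl
  · have : Metric.infDist v {p, u} ≤ ‖v - p‖ := by
      simpa [dist_eq_norm] using
        Metric.infDist_le_dist_of_mem (x := v) (by simp : p ∈ ({p, u} : Set X))
    linarith

lemma relaxed_projSet_pair_of_two_mul_lt {p c t lam u : ℝ} (hu : u ∈ projSet {p, c} (c + t))
    (ht : 0 ≤ t) (htp : 2 * t < p - c) :
    (1 - lam) * (c + t) + lam * u = c + (1 - lam) * t := by
  rw [Set.pair_comm] at hu
  obtain rfl : u = c := eq_left_of_mem_projSet_pair hu <| by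
    rw [Real.norm_eq_abs, Real.norm_eq_abs, abs_of_nonneg (by linarith),
      abs_of_nonpos (by linarith)]
    linarith
  ring

lemma IsMARP.doubletons_closed_form {p q c lam d : ℝ} {aa xx bb Y : ℕ → ℝ}
    (h : IsMARP {p, c} {q, c} (fun _ => lam) (fun _ => lam) aa xx bb Y)
    (hlam0 : 0 ≤ lam) (hlam1 : lam ≤ 1) (hd : 0 ≤ d)
    (hdp : 2 * ((1 - lam) * d) < p - c) (hdq : 2 * d < q - c) (hx0 : xx 0 = c + d) (n : ℕ) :
    xx n = c + (1 - lam) ^ (2 * n) * d ∧ Y (n + 1) = c + (1 - lam) ^ (2 * n + 1) * d := by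
  have hρ0 : 0 ≤ 1 - lam := by linarith
  have hρ1 : 1 - lam ≤ 1 := by linarith
  have B_step : ∀ k, xx k = c + (1 - lam) ^ (2 * k) * d →
      Y (k + 1) = c + (1 - lam) ^ (2 * k + 1) * d := by
    intro k hk
    obtain ⟨-, -, hb, hY⟩ := h k
    rw [hk] at hb
    have hle : (1 - lam) ^ (2 * k) * d ≤ d := mul_le_of_le_one_left hd (pow_le_one₀ hρ0 hρ1)
    rw [hY, smul_eq_mul, smul_eq_mul, hk,
      relaxed_projSet_pair_of_two_mul_lt hb (by positivity) (by linarith)]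
    ring
  induction n with
  | zero => exact ⟨by simpa using hx0, B_step 0 (by simpa using hx0)⟩
  | succ n ih =>
    have hx : xx (n + 1) = c + (1 - lam) ^ (2 * (n + 1)) * d := by
      obtain ⟨ha, hx, -, -⟩ := h (n + 1)
      rw [ih.2] at ha
      have hle : (1 - lam) ^ (2 * n + 1) * d ≤ (1 - lam) * d := by
        gcongr
        exact pow_le_of_le_one hρ0 hρ1 (by omega)
      rw [hx, smul_eq_mul, smul_eq_mul, ih.2,
        relaxed_projSet_pair_of_two_mul_lt ha (by positivity) (by linarith)]
      ring
    exact ⟨hx, B_step _ hx⟩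

lemma neg_add_lt_sqrt_sq_sub_sq {a c : ℝ} (ha : 0 < a) (hac : a < -c) :
    -(a + c) < √(c ^ 2 - a ^ 2) := by
  rw [Real.lt_sqrt (by linarith)]
  nlinarith

/-- `(a + c + √(c² - a²)) / (2a)` is the larger root of `2aλ² - 2(a + c)λ + (a + c)`, and the
claimed inequality is this quadratic being positive. -/
lemma two_mul_one_sub_mul_lt_of_root_lt {a c lam : ℝ} (ha : 0 < a) (hac : a < -c)
    (hlam : a + c + √(c ^ 2 - a ^ 2) < 2 * a * lam) :
    2 * ((1 - lam) * (lam * a - c)) < a - c := by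
  have hS := Real.sq_sqrt (show 0 ≤ c ^ 2 - a ^ 2 by nlinarith)
  have hsq : c ^ 2 - a ^ 2 < (2 * a * lam - (a + c)) ^ 2 := by
    rw [← hS]
    gcongr
    linarith [Real.sqrt_nonneg (c ^ 2 - a ^ 2)]
  nlinarith

lemma pair_inter_pair_eq_singleton {α : Type*} {a b c : α} (hab : a ≠ b) :
    ({a, c} : Set α) ∩ {b, c} = {c} := by
  rw [Set.pair_comm a, Set.pair_comm b, ← Set.insert_inter_distrib,
    Set.singleton_inter_eq_empty (s := ({b} : Set α)).mpr hab, insert_empty_eq]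

theorem marp_converges_two_doubletons_general
    (a b c : ℝ) (ha : 0 < a)
    (h1 : max a (b - 2 * a) < -c)
    (A B : Set ℝ) (hA : A = {a, c}) (hB : B = {b, c})
    (lam : ℝ)
    (hlam : lam ∈ Set.Ioo ((a + c + Real.sqrt (c ^ 2 - a ^ 2)) / (2 * a)) ((b + c) / (2 * a)))
    (aa xx bb Y : ℕ → ℝ)
    (hMARP : IsMARP A B (fun _ => lam) (fun _ => lam) aa xx bb Y)
    (hstart : Y 0 = 0) :
    (0 < lam ∧ lam < 1) ∧ A ∩ B = {c} ∧
    ∃ M : ℝ, 0 ≤ M ∧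
      ∀ n : ℕ, max (|xx n - c|) (|Y (n + 1) - c|) ≤ M * (1 - lam) ^ n := by
  subst hA hB
  have hac : a < -c := (le_max_left _ _).trans_lt h1
  have hlo : a + c + √(c ^ 2 - a ^ 2) < 2 * a * lam := by
    rw [mul_comm]; exact (div_lt_iff₀ (by positivity)).mp hlam.1
  have hhi : 2 * a * lam < b + c := by
    rw [mul_comm]; exact (lt_div_iff₀ (by positivity)).mp hlam.2
  have hlam0 : 0 < lam := by nlinarith [neg_add_lt_sqrt_sq_sub_sq ha hac]
  have hlam1 : lam < 1 := by nlinarith [le_max_right a (b - 2 * a)]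
  have hx0 : xx 0 = c + (lam * a - c) := by
    obtain ⟨ha0, hx0, -, -⟩ := hMARP 0
    rw [hstart] at ha0 hx0
    obtain rfl : aa 0 = a := eq_left_of_mem_projSet_pair ha0 <| by
      simpa [abs_of_pos ha, abs_of_neg (show c < 0 by linarith)] using hac
    simp [hx0]
  have hd : 0 ≤ lam * a - c := by nlinarith
  have hform := hMARP.doubletons_closed_form hlam0.le hlam1.le hd
    (two_mul_one_sub_mul_lt_of_root_lt ha hac hlo) (by linarith) hx0
  refine ⟨⟨hlam0, hlam1⟩, pair_inter_pair_eq_singleton (by nlinarith), lam * a - c, hd,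
    fun n => ?_⟩
  have hρ0 : 0 ≤ 1 - lam := by linarith
  have hρ1 : 1 - lam ≤ 1 := by linarith
  rw [(hform n).1, (hform n).2, add_sub_cancel_left, add_sub_cancel_left,
    abs_of_nonneg (by positivity), abs_of_nonneg (by positivity)]
  have hpow : ∀ k, n ≤ k → (1 - lam) ^ k * (lam * a - c) ≤ (lam * a - c) * (1 - lam) ^ n :=
    fun k hk => by
      rw [mul_comm]; exact mul_le_mul_of_nonneg_left (pow_le_pow_of_le_one hρ0 hρ1 hk) hd
  exact max_le (hpow _ (by omega)) (hpow _ (by omega))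

/-- Proposition 7.2(ii): the λ-MARP converges linearly with rate `1 - λ` to the
unique point of `A ∩ B`. -/
theorem marp_converges_two_doubletons
    (a b c : ℝ) (ha : 0 < a) (hb : 0 < b) (hc : c < 0)
    (h1 : max a (b - 2 * a) < -c)
    (h2 : -c < Real.sqrt (a ^ 2 + (b - a) ^ 2))
    (h3 : Real.sqrt (a ^ 2 + (b - a) ^ 2) < b)
    (A B : Set ℝ) (hA : A = {a, c}) (hB : B = {b, c})
    (lam : ℝ)
    (hlam : lam ∈ Set.Ioo ((a + c + Real.sqrt (c ^ 2 - a ^ 2)) / (2 * a)) ((b + c) / (2 * a)))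
    (aa xx bb Y : ℕ → ℝ)
    (hMARP : IsMARP A B (fun _ => lam) (fun _ => lam) aa xx bb Y)
    (hstart : Y 0 = 0) :
    (0 < lam ∧ lam < 1) ∧ A ∩ B = {c} ∧
    ∃ M : ℝ, 0 ≤ M ∧
      ∀ n : ℕ, max (|xx n - c|) (|Y (n + 1) - c|) ≤ M * (1 - lam) ^ n :=
  marp_converges_two_doubletons_general a b c ha h1 A B hA hB lam hlam aa xx bb Y hMARP hstart
end
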